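/- arXiv:1906.05223 — 5 statements merged into one kernel-verified Lean document; each statement's English description precedes it below -/
import Mathlib

section
/- The maps ∂_i on the sets T_n of leaf-labelled trees satisfy the simplicial identities: for all i < j, ∂_i ∘ ∂_j = ∂_{j-1} ∘ ∂_i as maps T_n → T_{n-2}. Hence the T_n form a Δ-set. -/
set_option linter.unusedSectionVars false

/-- A tree without bivalent vertices whose leaves are labelled bijectively by `A`,
encoded (via the split-equivalence theorem) by its set of splits: each internal
edge of the tree determines the bipartition of the leaf set into the leaves on
its two sides; both sides have at least two elements and any two splits are
compatible (some pair of opposite sides is disjoint). -/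
structure LTree (A : Type*) [Fintype A] [DecidableEq A] where
  splits : Finset (Finset A)
  compl_mem : ∀ B ∈ splits, Bᶜ ∈ splits
  two_le : ∀ B ∈ splits, 2 ≤ B.card
  two_le_compl : ∀ B ∈ splits, 2 ≤ Bᶜ.card
  compat : ∀ B ∈ splits, ∀ C ∈ splits,
    B ∩ C = ∅ ∨ B ∩ Cᶜ = ∅ ∨ Bᶜ ∩ C = ∅ ∨ Bᶜ ∩ Cᶜ = ∅

namespace LTree

variable {A B : Type*} [Fintype A] [DecidableEq A] [Fintype B] [DecidableEq B]

@[ext] theorem ext' {t t' : LTree A} (h : t.splits = t'.splits) : t = t' := by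
  cases t; cases t'; simpa using h

private lemma image_compl (e : A ≃ B) (S : Finset A) :
    (S.image e)ᶜ = Sᶜ.image e := by
  ext b
  simp only [Finset.mem_compl, Finset.mem_image]
  constructor
  · intro h
    exact ⟨e.symm b, fun hm => h ⟨e.symm b, hm, e.apply_symm_apply b⟩, e.apply_symm_apply b⟩
  · rintro ⟨a, ha, rfl⟩ ⟨a', ha', he⟩
    exact ha (e.injective he ▸ ha')

/-- Relabelling the leaves of a tree along a bijection of the label sets. -/
def relabel (e : A ≃ B) (t : LTree A) : LTree B where
  splits := t.splits.image (Finset.image e)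
  compl_mem := by
    simp only [Finset.mem_image, forall_exists_index, and_imp]
    rintro _ C hC rfl
    exact ⟨Cᶜ, t.compl_mem C hC, (image_compl e C).symm⟩
  two_le := by
    simp only [Finset.mem_image, forall_exists_index, and_imp]
    rintro _ C hC rfl
    rw [Finset.card_image_of_injective _ e.injective]
    exact t.two_le C hC
  two_le_compl := by
    simp only [Finset.mem_image, forall_exists_index, and_imp]
    rintro _ C hC rfl
    rw [image_compl e C, Finset.card_image_of_injective _ e.injective]
    exact t.two_le_compl C hC
  compat := by
    simp only [Finset.mem_image, forall_exists_index, and_imp]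
    rintro _ C hC rfl _ D hD rfl
    have key : ∀ S T : Finset A, S ∩ T = ∅ → (S.image e) ∩ (T.image e) = ∅ := by
      intro S T h
      rw [← Finset.image_inter _ _ e.injective, h, Finset.image_empty]
    rw [image_compl e C, image_compl e D]
    rcases t.compat C hC D hD with h | h | h | h
    · exact Or.inl (key _ _ h)
    · exact Or.inr (Or.inl (key _ _ h))
    · exact Or.inr (Or.inr (Or.inl (key _ _ h)))
    · exact Or.inr (Or.inr (Or.inr (key _ _ h)))

private lemma subtype_compl (μ : A) (S : Finset A) :
    (S.subtype (· ≠ μ))ᶜ = Sᶜ.subtype (· ≠ μ) := by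
  ext a
  simp [Finset.mem_subtype]

private lemma subtype_inter (μ : A) (S T : Finset A) :
    (S.subtype (· ≠ μ)) ∩ (T.subtype (· ≠ μ)) = (S ∩ T).subtype (· ≠ μ) := by
  ext a
  simp [Finset.mem_subtype]

/-- The map `∂_μ`: erase the leaf labelled `μ` (and smooth out any resulting
bivalent vertex).  In the split encoding this restricts every split to
`A \ {μ}` and discards the splits that become degenerate. -/
def del (t : LTree A) (μ : A) : LTree {a : A // a ≠ μ} where
  splits := (t.splits.image (fun C => C.subtype (· ≠ μ))).filter
      (fun C => 2 ≤ C.card ∧ 2 ≤ Cᶜ.card)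
  compl_mem := by
    simp only [Finset.mem_filter, Finset.mem_image, forall_exists_index, and_imp]
    rintro _ C hC rfl h1 h2
    refine ⟨⟨Cᶜ, t.compl_mem C hC, (subtype_compl μ C).symm⟩, ?_, ?_⟩
    · exact h2
    · rwa [compl_compl]
  two_le := fun C hC => ((Finset.mem_filter.mp hC).2).1
  two_le_compl := fun C hC => ((Finset.mem_filter.mp hC).2).2
  compat := by
    simp only [Finset.mem_filter, Finset.mem_image, forall_exists_index, and_imp]
    rintro _ C hC rfl - - _ D hD rfl - -
    have key : ∀ S T : Finset A, S ∩ T = ∅ →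
        (S.subtype (· ≠ μ)) ∩ (T.subtype (· ≠ μ)) = ∅ := by
      intro S T h
      rw [subtype_inter, h]
      ext a
      simp [Finset.mem_subtype]
    rw [subtype_compl μ C, subtype_compl μ D]
    rcases t.compat C hC D hD with h | h | h | h
    · exact Or.inl (key _ _ h)
    · exact Or.inr (Or.inl (key _ _ h))
    · exact Or.inr (Or.inr (Or.inl (key _ _ h)))
    · exact Or.inr (Or.inr (Or.inr (key _ _ h)))

/-- `S` is a "block" of `t`: the set of leaves hanging off a single edge,
i.e. either a single leaf or one side of an internal edge. -/
def Block (t : LTree A) (S : Finset A) : Prop := S.card = 1 ∨ S ∈ t.splits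

/-- Two leaves `α`, `β` of `t` are adjacent if either they are attached to the
same vertex (no split separates them), or their attachment vertices are both
trivalent and joined by an edge (there is a split separating them such that on
each side, removing the leaf leaves a single block). -/
def Adjacent (t : LTree A) (α β : A) : Prop :=
  (∀ C ∈ t.splits, (α ∈ C ↔ β ∈ C)) ∨
  ∃ C ∈ t.splits, α ∈ C ∧ β ∉ C ∧ t.Block (C.erase α) ∧ t.Block (Cᶜ.erase β)

end LTree

/-- The face map `∂_i : T_{n+1} → T_n` on isomorphism classes of trees with
leaves labelled by `{0, …, n+1}`: erase the leaf labelled `i`, relabel the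
remaining leaves order-preservingly, and smooth any resulting bivalent vertex. -/
def LTree.face {n : ℕ} (i : Fin (n + 2)) (t : LTree (Fin (n + 2))) : LTree (Fin (n + 1)) :=
  (t.del i).relabel (finSuccAboveEquiv i).symm


namespace Scratch

variable {n : ℕ}

private def P {k : ℕ} (C : Finset (Fin k)) : Prop := 2 ≤ C.card ∧ 2 ≤ Cᶜ.card

instance {k : ℕ} : DecidablePred (P (k := k)) := fun _ => by unfold P; infer_instance

private lemma image_compl' {A B : Type*} [Fintype A] [DecidableEq A] [Fintype B] [DecidableEq B]
    (e : A ≃ B) (S : Finset A) : (S.image e)ᶜ = Sᶜ.image e := by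
  ext b
  simp only [Finset.mem_compl, Finset.mem_image]
  constructor
  · intro h
    exact ⟨e.symm b, fun hm => h ⟨e.symm b, hm, e.apply_symm_apply b⟩, e.apply_symm_apply b⟩
  · rintro ⟨a, ha, rfl⟩ ⟨a', ha', he⟩
    exact ha (e.injective he ▸ ha')

private def faceFun (i : Fin (n + 2)) (C : Finset (Fin (n + 2))) : Finset (Fin (n + 1)) :=
  Finset.univ.filter (fun x => i.succAbove x ∈ C)

private lemma mem_faceFun {i : Fin (n + 2)} {C : Finset (Fin (n + 2))} {x : Fin (n + 1)} :
    x ∈ faceFun i C ↔ i.succAbove x ∈ C := by simp [faceFun]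

private lemma faceFun_compl (i : Fin (n + 2)) (C : Finset (Fin (n + 2))) :
    (faceFun i C)ᶜ = faceFun i Cᶜ := by
  ext x; simp [mem_faceFun]

private lemma card_faceFun_le (i : Fin (n + 2)) (C : Finset (Fin (n + 2))) :
    (faceFun i C).card ≤ C.card := by
  calc (faceFun i C).card = ((faceFun i C).image i.succAbove).card := by
        rw [Finset.card_image_of_injective _ (Fin.succAbove_right_injective)]
    _ ≤ C.card := by
        apply Finset.card_le_card
        intro x hx
        simp only [Finset.mem_image] at hx
        obtain ⟨y, hy, rfl⟩ := hx
        exact mem_faceFun.mp hy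

private lemma P_of_P_faceFun {i : Fin (n + 2)} {C : Finset (Fin (n + 2))}
    (h : P (faceFun i C)) : P C := by
  obtain ⟨h1, h2⟩ := h
  refine ⟨le_trans h1 (card_faceFun_le i C), ?_⟩
  rw [faceFun_compl] at h2
  exact le_trans h2 (card_faceFun_le i Cᶜ)

private lemma key_image (i : Fin (n + 2)) (C : Finset (Fin (n + 2))) :
    (C.subtype (· ≠ i)).image (finSuccAboveEquiv i).symm = faceFun i C := by
  ext x
  simp only [Finset.mem_image, Finset.mem_subtype, mem_faceFun]
  constructor
  · rintro ⟨a, ha, rfl⟩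
    have h2 : i.succAbove ((finSuccAboveEquiv i).symm a) = (a : Fin (n + 2)) :=
      congrArg Subtype.val ((finSuccAboveEquiv i).apply_symm_apply a)
    rwa [h2]
  · intro hx
    exact ⟨⟨i.succAbove x, i.succAbove_ne x⟩, hx, by
      rw [← finSuccAboveEquiv_apply, Equiv.symm_apply_apply]⟩

private lemma face_splits (i : Fin (n + 2)) (t : LTree (Fin (n + 2))) :
    (t.face i).splits = (t.splits.image (faceFun i)).filter P := by
  ext S
  simp only [LTree.face, LTree.relabel, LTree.del, Finset.mem_image, Finset.mem_filter]
  constructor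
  · rintro ⟨D, hD, rfl⟩
    obtain ⟨⟨C, hC, rfl⟩, h1, h2⟩ := hD
    rw [key_image]
    refine ⟨⟨C, hC, rfl⟩, ?_, ?_⟩
    · rw [← key_image, Finset.card_image_of_injective _ (Equiv.injective _)]
      exact h1
    · rw [← key_image, image_compl' _, Finset.card_image_of_injective _ (Equiv.injective _)]
      exact h2
  · rintro ⟨⟨C, hC, rfl⟩, hP1, hP2⟩
    refine ⟨C.subtype (· ≠ i), ⟨⟨C, hC, rfl⟩, ?_, ?_⟩, key_image i C⟩
    · rwa [← Finset.card_image_of_injective _ (Equiv.injective (finSuccAboveEquiv i).symm),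
        key_image]
    · rwa [← Finset.card_image_of_injective _ (Equiv.injective (finSuccAboveEquiv i).symm),
        ← image_compl', key_image]


private lemma val_succAbove {k : ℕ} (p : Fin (k + 1)) (x : Fin k) :
    (p.succAbove x).val = if x.val < p.val then x.val else x.val + 1 := by
  rw [Fin.succAbove]
  split_ifs with h1 h2 h2 <;>
    simp_all [Fin.lt_def]

private lemma collapse {k : ℕ} (i' : Fin (k + 2)) (u : Finset (Finset (Fin (k + 2)))) :
    ((u.filter P).image (faceFun i')).filter P = (u.image (faceFun i')).filter P := by
  ext S
  simp only [Finset.mem_filter, Finset.mem_image]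
  constructor
  · rintro ⟨⟨D, ⟨hD, _⟩, rfl⟩, hPS⟩
    exact ⟨⟨D, hD, rfl⟩, hPS⟩
  · rintro ⟨⟨D, hD, rfl⟩, hPS⟩
    exact ⟨⟨D, ⟨hD, P_of_P_faceFun hPS⟩, rfl⟩, hPS⟩

end Scratch

/-- The face maps `∂_i` on the sets `T_n` of leaf-labelled
trees without bivalent vertices satisfy the simplicial identities
`∂_i ∘ ∂_j = ∂_{j-1} ∘ ∂_i` for `i < j`; hence the `T_n` form a Δ-set.
Here `T_n` is realised as `LTree (Fin (n+1))` and the identity is stated for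
`T_{m+2} → T_m`. -/
theorem trees_simplicial_identities (m : ℕ) (i j : ℕ) (hij : i < j) (hj : j ≤ m + 2)
    (t : LTree (Fin (m + 3))) :
    LTree.face ⟨i, by omega⟩ (LTree.face ⟨j, by omega⟩ t) =
      LTree.face ⟨j - 1, by omega⟩ (LTree.face ⟨i, by omega⟩ t) := by
  open Scratch in
  apply LTree.ext'
  rw [face_splits, face_splits, face_splits, face_splits, collapse, collapse,
    Finset.image_image, Finset.image_image]
  have hfun : faceFun (⟨i, by omega⟩ : Fin (m + 2)) ∘ faceFun (⟨j, by omega⟩ : Fin (m + 3)) =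
      faceFun (⟨j - 1, by omega⟩ : Fin (m + 2)) ∘ faceFun (⟨i, by omega⟩ : Fin (m + 3)) := by
    funext C
    ext x
    simp only [Function.comp_apply, mem_faceFun]
    have heq : (⟨j, by omega⟩ : Fin (m + 3)).succAbove
          ((⟨i, by omega⟩ : Fin (m + 2)).succAbove x) =
        (⟨i, by omega⟩ : Fin (m + 3)).succAbove
          ((⟨j - 1, by omega⟩ : Fin (m + 2)).succAbove x) := by
      apply Fin.ext
      rw [val_succAbove, val_succAbove, val_succAbove, val_succAbove]
      simp only
      split_ifs <;> omega
    rw [heq]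
  rw [hfun]
end

section
/- Let t be a tree without bivalent vertices with leaves labelled by a finite set A, and let α, β be two distinct labels whose leaves are not adjacent in t (i.e., they are not attached to the same vertex, and it is not the case that both their attachment vertices are trivalent and joined by an edge). Then t is uniquely determined by the pair (∂_α t, ∂_β t): if t' is another such tree with ∂_α t' = ∂_α t and ∂_β t' = ∂_β t, then t' = t. -/
set_option linter.unusedSectionVars false

namespace LTree

variable {A : Type*} [Fintype A] [DecidableEq A]

lemma disj_elim {s u : Finset A} (h : s ∩ u = ∅) {a : A} (h1 : a ∈ s) (h2 : a ∈ u) : False := by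
  have : a ∈ s ∩ u := Finset.mem_inter.mpr ⟨h1, h2⟩
  simp [h] at this

lemma no4 {t : LTree A} {C D : Finset A} (hC : C ∈ t.splits) (hD : D ∈ t.splits)
    {a b c d : A} (ha1 : a ∈ C) (ha2 : a ∈ D) (hb1 : b ∈ C) (hb2 : b ∉ D)
    (hc1 : c ∉ C) (hc2 : c ∈ D) (hd1 : d ∉ C) (hd2 : d ∉ D) : False := by
  rcases t.compat C hC D hD with h | h | h | h
  · exact disj_elim h ha1 ha2
  · exact disj_elim h hb1 (Finset.mem_compl.mpr hb2)
  · exact disj_elim h (Finset.mem_compl.mpr hc1) hc2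
  · exact disj_elim h (Finset.mem_compl.mpr hd1) (Finset.mem_compl.mpr hd2)

lemma card_subtype_ne (μ : A) (C : Finset A) :
    (C.subtype (· ≠ μ)).card = (C.erase μ).card := by
  rw [Finset.card_subtype, Finset.filter_ne']

lemma erase_eq_of_subtype_eq {μ : A} {C D : Finset A}
    (h : C.subtype (· ≠ μ) = D.subtype (· ≠ μ)) : C.erase μ = D.erase μ := by
  have key : ∀ a, a ≠ μ → (a ∈ C ↔ a ∈ D) := by
    intro a ha
    have := Finset.ext_iff.mp h ⟨a, ha⟩
    simpa [Finset.mem_subtype] using this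
  ext a
  simp only [Finset.mem_erase]
  exact and_congr_right fun ha => key a ha

lemma mem_del {t : LTree A} {μ : A} {C : Finset A} (hC : C ∈ t.splits)
    (h1 : 2 ≤ (C.erase μ).card) (h2 : 2 ≤ (Cᶜ.erase μ).card) :
    C.subtype (· ≠ μ) ∈ (t.del μ).splits := by
  simp only [del, Finset.mem_filter, Finset.mem_image]
  refine ⟨⟨C, hC, rfl⟩, ?_, ?_⟩
  · rw [card_subtype_ne]; exact h1
  · rw [subtype_compl, card_subtype_ne]; exact h2

lemma lift {t₁ t₂ : LTree A} {μ : A} (h : (t₁.del μ).splits = (t₂.del μ).splits)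
    {C : Finset A} (hC : C ∈ t₂.splits)
    (h1 : 2 ≤ (C.erase μ).card) (h2 : 2 ≤ (Cᶜ.erase μ).card) :
    C.erase μ ∈ t₁.splits ∨ insert μ (C.erase μ) ∈ t₁.splits := by
  have hm : C.subtype (· ≠ μ) ∈ (t₁.del μ).splits := by
    rw [h]; exact mem_del hC h1 h2
  simp only [del, Finset.mem_filter, Finset.mem_image] at hm
  obtain ⟨⟨D, hD, hDs⟩, -⟩ := hm
  have he : D.erase μ = C.erase μ := erase_eq_of_subtype_eq hDs
  by_cases hμ : μ ∈ D
  · right; rw [← he, Finset.insert_erase hμ]; exact hD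
  · left; rw [← he, Finset.erase_eq_of_notMem hμ]; exact hD

lemma exists_ne_mem {s : Finset A} (h : 2 ≤ s.card) (b : A) : ∃ c ∈ s, c ≠ b := by
  by_contra hc
  push_neg at hc
  have hsub : s ⊆ {b} := fun x hx => Finset.mem_singleton.mpr (hc x hx)
  have := Finset.card_le_card hsub
  simp at this
  omega

lemma exists_ne_ne_mem {s : Finset A} (h : 3 ≤ s.card) (a b : A) :
    ∃ c ∈ s, c ≠ a ∧ c ≠ b := by
  by_contra hc
  push_neg at hc
  have hsub : s ⊆ {a, b} := by
    intro x hx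
    by_cases hxa : x = a
    · simp [hxa]
    · simp [hc x hx hxa]
  have h1 := Finset.card_le_card hsub
  have h2 : ({a, b} : Finset A).card ≤ 2 :=
    le_trans (Finset.card_insert_le a {b}) (by simp)
  omega

end LTree

namespace LTree

variable {A : Type*} [Fintype A] [DecidableEq A]

lemma lemA (t₁ t₂ : LTree A) {α β : A} (hab : α ≠ β)
    (hα : (t₁.del α).splits = (t₂.del α).splits)
    (hβ : (t₁.del β).splits = (t₂.del β).splits)
    {P : Finset A} (hP : P ∈ t₂.splits) (hPα : α ∈ P) (hPβ : β ∉ P)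
    {C : Finset A} (hC : C ∈ t₂.splits) (hCα : α ∉ C) (hCβ : β ∉ C) :
    C ∈ t₁.splits := by
  have hαc : α ∈ Cᶜ := Finset.mem_compl.mpr hCα
  have hβc : β ∈ Cᶜ := Finset.mem_compl.mpr hCβ
  have hc2 := t₂.two_le C hC
  have hcc2 := t₂.two_le_compl C hC
  by_cases h3 : 3 ≤ Cᶜ.card
  · obtain ⟨γ, hγ, hγα, hγβ⟩ := exists_ne_ne_mem h3 α β
    have hγC : γ ∉ C := Finset.mem_compl.mp hγ
    have eα : C.erase α = C := Finset.erase_eq_of_notMem hCα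
    have eβ : C.erase β = C := Finset.erase_eq_of_notMem hCβ
    have l1 := lift hα hC (by rw [eα]; exact hc2)
      (by rw [Finset.card_erase_of_mem hαc]; omega)
    rw [eα] at l1
    have l2 := lift hβ hC (by rw [eβ]; exact hc2)
      (by rw [Finset.card_erase_of_mem hβc]; omega)
    rw [eβ] at l2
    rcases l1 with h1 | h1
    · exact h1
    rcases l2 with h2 | h2
    · exact h2
    obtain ⟨c0, hc0⟩ : C.Nonempty := Finset.card_pos.mp (by omega)
    exact (no4 h1 h2 (Finset.mem_insert_of_mem hc0) (Finset.mem_insert_of_mem hc0)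
      (Finset.mem_insert_self α C) (show α ∉ insert β C by simp [hab, hCα])
      (show β ∉ insert α C by simp [Ne.symm hab, hCβ]) (Finset.mem_insert_self β C)
      (show γ ∉ insert α C by simp [hγα, hγC]) (show γ ∉ insert β C by simp [hγβ, hγC])).elim
  · -- Cᶜ.card = 2, so Cᶜ = {α, β}
    have hcc : Cᶜ = {α, β} := by
      refine (Finset.eq_of_subset_of_card_le
        (Finset.insert_subset hαc (Finset.singleton_subset_iff.mpr hβc)) ?_).symm
      rw [Finset.card_insert_of_notMem (by simp [hab]), Finset.card_singleton]
      omega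
    exfalso
    rcases t₂.compat P hP C hC with h | h | h | h
    · have hsub : P ⊆ {α} := by
        intro x hx
        have hxc : x ∈ Cᶜ := Finset.mem_compl.mpr (fun hc => disj_elim h hx hc)
        rw [hcc] at hxc
        rcases Finset.mem_insert.mp hxc with rfl | hb
        · exact Finset.mem_singleton_self _
        · exact absurd ((Finset.mem_singleton.mp hb) ▸ hx) hPβ
      have := Finset.card_le_card hsub
      have := t₂.two_le P hP
      simp at *
      omega
    · exact disj_elim h hPα hαc
    · have hsub : Pᶜ ⊆ {β} := by
        intro x hx
        have hxc : x ∈ Cᶜ := Finset.mem_compl.mpr (fun hc => disj_elim h hx hc)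
        rw [hcc] at hxc
        rcases Finset.mem_insert.mp hxc with rfl | hb
        · exact absurd hPα (Finset.mem_compl.mp hx)
        · exact hb
      have := Finset.card_le_card hsub
      have := t₂.two_le_compl P hP
      simp at *
      omega
    · exact disj_elim h (Finset.mem_compl.mpr hPβ) hβc

end LTree

namespace LTree

variable {A : Type*} [Fintype A] [DecidableEq A]

lemma lemB (t t' : LTree A) {α β : A} (hab : α ≠ β)
    (hαs : (t'.del α).splits = (t.del α).splits)
    (hβs : (t'.del β).splits = (t.del β).splits)
    (hna : ∀ Q ∈ t.splits, α ∈ Q → β ∉ Q →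
      t.Block (Q.erase α) → t.Block (Qᶜ.erase β) → False)
    {C : Finset A} (hC : C ∈ t.splits) (hCα : α ∈ C) (hCβ : β ∉ C) :
    C ∈ t'.splits := by
  have hαc : α ∉ Cᶜ := by simp [hCα]
  have hβc : β ∈ Cᶜ := Finset.mem_compl.mpr hCβ
  have hc2 := t.two_le C hC
  have hcc2 := t.two_le_compl C hC
  have eβ : C.erase β = C := Finset.erase_eq_of_notMem hCβ
  have ceα : Cᶜ.erase α = Cᶜ := Finset.erase_eq_of_notMem hαc
  have cY : (insert β C)ᶜ = Cᶜ.erase β := Finset.compl_insert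
  have hαnX : α ∉ C.erase α := Finset.notMem_erase _ _
  have hβnX : β ∉ C.erase α := fun h => hCβ (Finset.mem_of_mem_erase h)
  have hαnD : α ∉ insert β (C.erase α) := by simp [hab, hαnX]
  -- common contradiction: D = insert β (C.erase α) cannot be a split of t
  have hDcon : insert β (C.erase α) ∈ t.splits → 2 ≤ (C.erase α).card → False := by
    intro hD hcd
    obtain ⟨x, hx⟩ : (C.erase α).Nonempty := Finset.card_pos.mp (by omega)
    obtain ⟨y, hy⟩ : (Cᶜ.erase β).Nonempty :=
      Finset.card_pos.mp (by rw [Finset.card_erase_of_mem hβc]; omega)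
    have hyc : y ∈ Cᶜ := Finset.mem_of_mem_erase hy
    have hynachieve : y ∉ C := Finset.mem_compl.mp hyc
    exact no4 hC hD (Finset.mem_of_mem_erase hx) (Finset.mem_insert_of_mem hx)
      hCα hαnD hCβ (Finset.mem_insert_self _ _)
      hynachieve
      (show y ∉ insert β (C.erase α) by
        simp [Finset.mem_erase, (Finset.mem_erase.mp hy).1, hynachieve])
  by_cases h2 : C.card = 2 <;> by_cases h2' : Cᶜ.card = 2
  · -- both sides of size 2 : α and β are adjacent, contradiction
    exact (hna C hC hCα hCβ
      (Or.inl (by rw [Finset.card_erase_of_mem hCα]; omega))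
      (Or.inl (by rw [Finset.card_erase_of_mem hβc]; omega))).elim
  · -- C.card = 2, Cᶜ.card ≥ 3
    have h3 : 3 ≤ Cᶜ.card := by omega
    have hb1 : t.Block (C.erase α) := Or.inl (by rw [Finset.card_erase_of_mem hCα]; omega)
    have l2 := lift hβs hC (by rw [eβ]; omega)
      (by rw [Finset.card_erase_of_mem hβc]; omega)
    rw [eβ] at l2
    rcases l2 with h | hY
    · exact h
    have hαY : α ∈ insert β C := Finset.mem_insert_of_mem hCα
    have hYα : (insert β C).erase α = insert β (C.erase α) :=
      Finset.erase_insert_of_ne (Ne.symm hab)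
    have l3 := lift hαs.symm hY
      (by rw [hYα, Finset.card_insert_of_notMem hβnX, Finset.card_erase_of_mem hCα]; omega)
      (by rw [cY, Finset.erase_eq_of_notMem (fun h => hαc (Finset.mem_of_mem_erase h)),
          Finset.card_erase_of_mem hβc]; omega)
    rw [Finset.insert_erase hαY, hYα] at l3
    rcases l3 with hZ | hY'
    · -- Z = insert β (C.erase α) ∈ t.splits : contradiction with C
      obtain ⟨γ, hγ, hγβ⟩ := exists_ne_mem hcc2 β
      have hγC : γ ∉ C := Finset.mem_compl.mp hγ
      obtain ⟨x, hx⟩ : (C.erase α).Nonempty :=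
        Finset.card_pos.mp (by rw [Finset.card_erase_of_mem hCα]; omega)
      exact (no4 hC hZ (Finset.mem_of_mem_erase hx) (Finset.mem_insert_of_mem hx)
        hCα hαnD hCβ (Finset.mem_insert_self _ _) hγC
        (show γ ∉ insert β (C.erase α) by
          simp [Finset.mem_erase, hγβ, hγC])).elim
    · -- insert β C ∈ t.splits : adjacency contradiction
      have hYc := t.compl_mem _ hY'
      rw [cY] at hYc
      exact (hna C hC hCα hCβ hb1 (Or.inr hYc)).elim
  · -- C.card ≥ 3, Cᶜ.card = 2
    have h3 : 3 ≤ C.card := by omega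
    have hb2 : t.Block (Cᶜ.erase β) := Or.inl (by rw [Finset.card_erase_of_mem hβc]; omega)
    have l1 := lift hαs hC (by rw [Finset.card_erase_of_mem hCα]; omega) (by rw [ceα]; omega)
    rw [Finset.insert_erase hCα] at l1
    rcases l1 with hX | h
    · -- hX : C.erase α ∈ t'.splits
      have eXβ : (C.erase α).erase β = C.erase α := Finset.erase_eq_of_notMem hβnX
      have l4 := lift hβs.symm hX (by rw [eXβ, Finset.card_erase_of_mem hCα]; omega)
        (by rw [Finset.compl_erase, Finset.erase_insert_of_ne hab,
            Finset.card_insert_of_notMem (fun h => hαc (Finset.mem_of_mem_erase h)),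
            Finset.card_erase_of_mem hβc]; omega)
      rw [eXβ] at l4
      rcases l4 with hXS | hD
      · exact (hna C hC hCα hCβ (Or.inr hXS) hb2).elim
      · exact (hDcon hD (by rw [Finset.card_erase_of_mem hCα]; omega)).elim
    · exact h
  · -- both ≥ 3
    have h3 : 3 ≤ C.card := by omega
    have h3' : 3 ≤ Cᶜ.card := by omega
    have l1 := lift hαs hC (by rw [Finset.card_erase_of_mem hCα]; omega) (by rw [ceα]; omega)
    rw [Finset.insert_erase hCα] at l1
    have l2 := lift hβs hC (by rw [eβ]; omega)
      (by rw [Finset.card_erase_of_mem hβc]; omega)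
    rw [eβ] at l2
    rcases l1 with hX | h
    · rcases l2 with h | hY
      · exact h
      · -- main case: hX : C.erase α ∈ t'.splits, hY : insert β C ∈ t'.splits
        have hαY : α ∈ insert β C := Finset.mem_insert_of_mem hCα
        have hYα : (insert β C).erase α = insert β (C.erase α) :=
          Finset.erase_insert_of_ne (Ne.symm hab)
        have l3 := lift hαs.symm hY
          (by rw [hYα, Finset.card_insert_of_notMem hβnX, Finset.card_erase_of_mem hCα]; omega)
          (by rw [cY, Finset.erase_eq_of_notMem (fun h => hαc (Finset.mem_of_mem_erase h)),
              Finset.card_erase_of_mem hβc]; omega)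
        rw [Finset.insert_erase hαY, hYα] at l3
        rcases l3 with hD | hY'
        · exact (hDcon hD (by rw [Finset.card_erase_of_mem hCα]; omega)).elim
        · have eXβ : (C.erase α).erase β = C.erase α := Finset.erase_eq_of_notMem hβnX
          have l4 := lift hβs.symm hX (by rw [eXβ, Finset.card_erase_of_mem hCα]; omega)
            (by rw [Finset.compl_erase, Finset.erase_insert_of_ne hab,
                Finset.card_insert_of_notMem (fun h => hαc (Finset.mem_of_mem_erase h)),
                Finset.card_erase_of_mem hβc]; omega)
          rw [eXβ] at l4
          rcases l4 with hXS | hD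
          · have hYc := t.compl_mem _ hY'
            rw [cY] at hYc
            exact (hna C hC hCα hCβ (Or.inr hXS) (Or.inr hYc)).elim
          · exact (hDcon hD (by rw [Finset.card_erase_of_mem hCα]; omega)).elim
    · exact h

end LTree

namespace LTree

variable {A : Type*} [Fintype A] [DecidableEq A]

lemma lemC (t t' : LTree A) {α β : A} (hab : α ≠ β)
    (hαs : (t'.del α).splits = (t.del α).splits)
    (hβs : (t'.del β).splits = (t.del β).splits)
    (hna : ∀ Q ∈ t.splits, α ∈ Q → β ∉ Q →
      t.Block (Q.erase α) → t.Block (Qᶜ.erase β) → False)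
    {P : Finset A} (hP : P ∈ t.splits) (hPα : α ∈ P) (hPβ : β ∉ P)
    {C : Finset A} (hC : C ∈ t'.splits) (hCα : α ∈ C) (hCβ : β ∉ C) :
    C ∈ t.splits := by
  have hαc : α ∉ Cᶜ := by simp [hCα]
  have hβc : β ∈ Cᶜ := Finset.mem_compl.mpr hCβ
  have hc2 := t'.two_le C hC
  have hcc2 := t'.two_le_compl C hC
  have hp2 := t.two_le P hP
  have hpc2 := t.two_le_compl P hP
  have hβP : β ∈ Pᶜ := Finset.mem_compl.mpr hPβ
  have hαP : α ∉ Pᶜ := by simp [hPα]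
  have eβ : C.erase β = C := Finset.erase_eq_of_notMem hCβ
  have ceα : Cᶜ.erase α = Cᶜ := Finset.erase_eq_of_notMem hαc
  have hcards := Finset.card_add_card_compl C
  have hcards' := Finset.card_add_card_compl P
  by_cases h2 : C.card = 2 <;> by_cases h2' : Cᶜ.card = 2
  · -- |A| = 4 : impossible since then α, β would be adjacent in t
    exact (hna P hP hPα hPβ
      (Or.inl (by rw [Finset.card_erase_of_mem hPα]; omega))
      (Or.inl (by rw [Finset.card_erase_of_mem hβP]; omega))).elim
  · -- C.card = 2, Cᶜ.card ≥ 3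
    have l2 := lift hβs.symm hC (by rw [eβ]; omega)
      (by rw [Finset.card_erase_of_mem hβc]; omega)
    rw [eβ] at l2
    rcases l2 with h | hY
    · exact h
    -- hY : insert β C ∈ t.splits
    have hαY : α ∈ insert β C := Finset.mem_insert_of_mem hCα
    rcases t.compat P hP _ hY with h | h | h | h
    · exact (disj_elim h hPα hαY).elim
    · -- P ⊆ insert β C hence P = C
      have hPC : P ⊆ C := by
        intro x hx
        have hxY : x ∈ insert β C := by
          by_contra hxn
          exact disj_elim h hx (Finset.mem_compl.mpr hxn)
        rcases Finset.mem_insert.mp hxY with rfl | hxC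
        · exact absurd hx hPβ
        · exact hxC
      have hPeq : P = C := Finset.eq_of_subset_of_card_le hPC (by omega)
      exact hPeq ▸ hP
    · exact (disj_elim h (Finset.mem_compl.mpr hPβ) (Finset.mem_insert_self _ _)).elim
    · -- Pᶜ ⊆ insert β C
      have hPcY : ∀ x ∈ Pᶜ, x ∈ insert β C := by
        intro x hx
        by_contra hxn
        exact disj_elim h hx (Finset.mem_compl.mpr hxn)
      have hsub : Pᶜ.erase β ⊆ C.erase α := by
        intro x hx
        obtain ⟨hxβ, hxP⟩ := Finset.mem_erase.mp hx
        rcases Finset.mem_insert.mp (hPcY x hxP) with rfl | hxC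
        · exact absurd rfl hxβ
        · exact Finset.mem_erase.mpr ⟨fun hxa => hαP (hxa ▸ hxP), hxC⟩
      have hcx : (C.erase α).card = 1 := by rw [Finset.card_erase_of_mem hCα]; omega
      have hpb : (Pᶜ.erase β).card = 1 := by
        have hle := Finset.card_le_card hsub
        rw [Finset.card_erase_of_mem hβP] at hle ⊢
        rw [hcx] at hle
        omega
      have heq : Pᶜ.erase β = C.erase α :=
        Finset.eq_of_subset_of_card_le hsub (by omega)
      have hbl2 : t.Block (Pᶜ.erase β) := Or.inl hpb
      have hQ2 : 2 ≤ (P.erase α).card := by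
        rcases Nat.lt_or_ge (P.erase α).card 2 with hl | hg
        · exfalso
          have h1 : (P.erase α).card = 1 := by
            rw [Finset.card_erase_of_mem hPα] at hl ⊢
            omega
          exact hna P hP hPα hPβ (Or.inl h1) hbl2
        · exact hg
      have l5 := lift hαs hP hQ2
        (by rw [Finset.erase_eq_of_notMem hαP]; omega)
      rw [Finset.insert_erase hPα] at l5
      rcases l5 with hQ | hP'
      · -- hQ : P.erase α ∈ t'.splits
        have hβQ : β ∉ P.erase α := fun h => hPβ (Finset.mem_of_mem_erase h)
        have eQβ : (P.erase α).erase β = P.erase α := Finset.erase_eq_of_notMem hβQ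
        have l6 := lift hβs.symm hQ (by rw [eQβ]; omega)
          (by rw [Finset.compl_erase, Finset.erase_insert_of_ne hab,
              Finset.card_insert_of_notMem (fun h => hαP (Finset.mem_of_mem_erase h)),
              hpb])
        rw [eQβ] at l6
        rcases l6 with hQS | hR
        · exact (hna P hP hPα hPβ (Or.inr hQS) hbl2).elim
        · -- hR : insert β (P.erase α) ∈ t.splits, and this set equals Cᶜ
          have hRC : insert β (P.erase α) = Cᶜ := by
            ext a
            simp only [Finset.mem_insert, Finset.mem_erase, Finset.mem_compl]
            constructor
            · rintro (rfl | ⟨haα, haP⟩)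
              · exact hCβ
              · intro haC
                have hmem : a ∈ C.erase α := Finset.mem_erase.mpr ⟨haα, haC⟩
                rw [← heq] at hmem
                exact (Finset.mem_compl.mp (Finset.mem_of_mem_erase hmem)) haP
            · intro haC
              by_cases haβ : a = β
              · exact Or.inl haβ
              · right
                have haY : a ∉ insert β C := by simp [haβ, haC]
                have haP : a ∈ P := by
                  by_contra haP
                  exact haY (hPcY a (Finset.mem_compl.mpr haP))
                exact ⟨fun hh => haC (hh ▸ hCα), haP⟩
          rw [hRC] at hR
          have := t.compl_mem _ hR
          rwa [compl_compl] at this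
      · -- hP' : P ∈ t'.splits : contradiction with C via no4
        exfalso
        obtain ⟨x, hx⟩ : (C.erase α).Nonempty := Finset.card_pos.mp (by omega)
        have hxPc : x ∈ Pᶜ := Finset.mem_of_mem_erase (show x ∈ Pᶜ.erase β from heq ▸ hx)
        obtain ⟨q, hq⟩ : (P.erase α).Nonempty := Finset.card_pos.mp (by omega)
        obtain ⟨hqα, hqP⟩ := Finset.mem_erase.mp hq
        have hqC : q ∉ C := by
          intro hqC
          have hmem : q ∈ C.erase α := Finset.mem_erase.mpr ⟨hqα, hqC⟩
          rw [← heq] at hmem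
          exact (Finset.mem_compl.mp (Finset.mem_of_mem_erase hmem)) hqP
        exact no4 hC hP' hCα hPα (Finset.mem_of_mem_erase hx)
          (Finset.mem_compl.mp hxPc) hqC hqP hCβ hPβ
  · -- C.card ≥ 3, Cᶜ.card = 2
    have l1 := lift hαs.symm hC (by rw [Finset.card_erase_of_mem hCα]; omega)
      (by rw [ceα]; omega)
    rw [Finset.insert_erase hCα] at l1
    rcases l1 with hX | h
    · -- hX : C.erase α ∈ t.splits
      have hαX : α ∉ C.erase α := Finset.notMem_erase _ _
      have hβX : β ∉ C.erase α := fun h => hCβ (Finset.mem_of_mem_erase h)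
      rcases t.compat P hP _ hX with h | h | h | h
      · -- P ∩ (C.erase α) = ∅
        have hPsub : P ⊆ insert α (Cᶜ.erase β) := by
          intro x hx
          by_cases hxα : x = α
          · exact Finset.mem_insert.mpr (Or.inl hxα)
          · have hxX : x ∉ C.erase α := fun hm => disj_elim h hx hm
            have hxC : x ∉ C := fun hm => hxX (Finset.mem_erase.mpr ⟨hxα, hm⟩)
            have hxβ : x ≠ β := fun hh => hPβ (hh ▸ hx)
            exact Finset.mem_insert.mpr
              (Or.inr (Finset.mem_erase.mpr ⟨hxβ, Finset.mem_compl.mpr hxC⟩))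
        have hcardP : P.card = 2 := by
          have hle := Finset.card_le_card hPsub
          rw [Finset.card_insert_of_notMem (fun hm => hαc (Finset.mem_of_mem_erase hm)),
            Finset.card_erase_of_mem hβc] at hle
          omega
        have hsub : C.erase α ⊆ Pᶜ.erase β := by
          intro x hx
          exact Finset.mem_erase.mpr ⟨fun hh => hβX (hh ▸ hx),
            Finset.mem_compl.mpr (fun hm => disj_elim h hm hx)⟩
        have heq : C.erase α = Pᶜ.erase β :=
          Finset.eq_of_subset_of_card_le hsub (by
            rw [Finset.card_erase_of_mem hβP, Finset.card_erase_of_mem hCα]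
            omega)
        exact (hna P hP hPα hPβ
          (Or.inl (by rw [Finset.card_erase_of_mem hPα]; omega))
          (Or.inr (heq ▸ hX))).elim
      · exact (disj_elim h hPα (Finset.mem_compl.mpr hαX)).elim
      · -- Pᶜ ∩ (C.erase α) = ∅, so C ⊆ P, so P = C
        have hCP : C ⊆ P := by
          intro x hx
          by_cases hxα : x = α
          · exact hxα ▸ hPα
          · by_contra hxP
            exact disj_elim h (Finset.mem_compl.mpr hxP) (Finset.mem_erase.mpr ⟨hxα, hx⟩)
        have hPcCc : Pᶜ ⊆ Cᶜ := fun x hx =>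
          Finset.mem_compl.mpr (fun hm => (Finset.mem_compl.mp hx) (hCP hm))
        have hcompl : Pᶜ = Cᶜ := Finset.eq_of_subset_of_card_le hPcCc (by omega)
        have hPC : P = C := by
          have := congrArg (·ᶜ) hcompl
          simpa using this
        exact hPC ▸ hP
      · exact (disj_elim h (Finset.mem_compl.mpr hPβ) (Finset.mem_compl.mpr hβX)).elim
    · exact h
  · -- both ≥ 3
    have l1 := lift hαs.symm hC (by rw [Finset.card_erase_of_mem hCα]; omega)
      (by rw [ceα]; omega)
    rw [Finset.insert_erase hCα] at l1
    have l2 := lift hβs.symm hC (by rw [eβ]; omega)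
      (by rw [Finset.card_erase_of_mem hβc]; omega)
    rw [eβ] at l2
    rcases l1 with hX | h
    · rcases l2 with h | hY
      · exact h
      · -- hX : C.erase α ∈ t.splits, hY : insert β C ∈ t.splits
        have hβX : β ∉ C.erase α := fun h => hCβ (Finset.mem_of_mem_erase h)
        have hαX : α ∉ C.erase α := Finset.notMem_erase _ _
        have hPX : P ∩ C.erase α = ∅ ∨ C.erase α ⊆ P := by
          rcases t.compat P hP _ hX with h | h | h | h
          · exact Or.inl h
          · exact (disj_elim h hPα (Finset.mem_compl.mpr hαX)).elim
          · exact Or.inr (fun x hx => by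
              by_contra hxP
              exact disj_elim h (Finset.mem_compl.mpr hxP) hx)
          · exact (disj_elim h (Finset.mem_compl.mpr hPβ) (Finset.mem_compl.mpr hβX)).elim
        have hPY : P ⊆ insert β C ∨ ∀ x ∈ Pᶜ, x ∈ insert β C := by
          rcases t.compat P hP _ hY with h | h | h | h
          · exact (disj_elim h hPα (Finset.mem_insert_of_mem hCα)).elim
          · exact Or.inl (fun x hx => by
              by_contra hxY
              exact disj_elim h hx (Finset.mem_compl.mpr hxY))
          · exact (disj_elim h (Finset.mem_compl.mpr hPβ) (Finset.mem_insert_self _ _)).elim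
          · exact Or.inr (fun x hx => by
              by_contra hxY
              exact disj_elim h hx (Finset.mem_compl.mpr hxY))
        rcases hPX with hPX | hPX <;> rcases hPY with hPY | hPY
        · -- P ∩ X = ∅ and P ⊆ insert β C : P ⊆ {α}, contradiction
          exfalso
          have hsub : P ⊆ {α} := by
            intro x hx
            rcases Finset.mem_insert.mp (hPY hx) with rfl | hxC
            · exact absurd hx hPβ
            · by_cases hxα : x = α
              · simp [hxα]
              · exact absurd (Finset.mem_erase.mpr ⟨hxα, hxC⟩)
                  (fun hm => disj_elim hPX hx hm)
          have := Finset.card_le_card hsub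
          simp at this
          omega
        · -- P ∩ X = ∅ and Pᶜ ⊆ insert β C : adjacency contradiction
          exfalso
          have hP1 : P.erase α = (insert β C)ᶜ := by
            ext a
            simp only [Finset.mem_erase, Finset.mem_compl, Finset.mem_insert]
            constructor
            · rintro ⟨haα, haP⟩
              push_neg
              refine ⟨fun hh => hPβ (hh ▸ haP), fun haC => ?_⟩
              exact disj_elim hPX haP (Finset.mem_erase.mpr ⟨haα, haC⟩)
            · intro ha
              push_neg at ha
              obtain ⟨haβ, haC⟩ := ha
              have haP : a ∈ P := by
                by_contra haP
                rcases Finset.mem_insert.mp (hPY a (Finset.mem_compl.mpr haP)) with hh | hh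
                · exact haβ hh
                · exact haC hh
              exact ⟨fun hh => haC (hh ▸ hCα), haP⟩
          have hP2 : Pᶜ.erase β = C.erase α := by
            ext a
            simp only [Finset.mem_erase, Finset.mem_compl]
            constructor
            · rintro ⟨haβ, haP⟩
              rcases Finset.mem_insert.mp (hPY a (Finset.mem_compl.mpr haP)) with hh | hh
              · exact absurd hh haβ
              · exact ⟨fun h => haP (h ▸ hPα), hh⟩
            · rintro ⟨haα, haC⟩
              exact ⟨fun hh => hCβ (hh ▸ haC),
                fun haP => disj_elim hPX haP (Finset.mem_erase.mpr ⟨haα, haC⟩)⟩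
          have hYc := t.compl_mem _ hY
          exact hna P hP hPα hPβ (Or.inr (by rw [hP1]; exact hYc))
            (Or.inr (by rw [hP2]; exact hX))
        · -- X ⊆ P and P ⊆ insert β C : P = C
          have hPeq : P = C := by
            apply Finset.Subset.antisymm
            · intro x hx
              rcases Finset.mem_insert.mp (hPY hx) with rfl | hxC
              · exact absurd hx hPβ
              · exact hxC
            · intro x hx
              by_cases hxα : x = α
              · exact hxα ▸ hPα
              · exact hPX (Finset.mem_erase.mpr ⟨hxα, hx⟩)
          exact hPeq ▸ hP
        · -- X ⊆ P and Pᶜ ⊆ insert β C : Pᶜ ⊆ {β}, contradiction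
          exfalso
          have hsub : Pᶜ ⊆ {β} := by
            intro x hx
            rcases Finset.mem_insert.mp (hPY x hx) with rfl | hxC
            · exact Finset.mem_singleton_self _
            · exfalso
              by_cases hxα : x = α
              · exact (Finset.mem_compl.mp hx) (hxα ▸ hPα)
              · exact (Finset.mem_compl.mp hx) (hPX (Finset.mem_erase.mpr ⟨hxα, hxC⟩))
          have := Finset.card_le_card hsub
          simp at this
          omega
    · exact h

end LTree

/-- If the leaves `α` and `β` of a tree `t` are not adjacent,
then `t` is uniquely determined by the pair `(∂_α t, ∂_β t)`. -/
theorem tree_determined_of_not_adjacent {A : Type*} [Fintype A] [DecidableEq A]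
    (t t' : LTree A) (α β : A) (hαβ : α ≠ β) (hadj : ¬ t.Adjacent α β)
    (hα : t'.del α = t.del α) (hβ : t'.del β = t.del β) : t' = t := by
  have hαs : (t'.del α).splits = (t.del α).splits := congrArg LTree.splits hα
  have hβs : (t'.del β).splits = (t.del β).splits := congrArg LTree.splits hβ
  have hna : ∀ Q ∈ t.splits, α ∈ Q → β ∉ Q →
      t.Block (Q.erase α) → t.Block (Qᶜ.erase β) → False :=
    fun Q hQ h1 h2 b1 b2 => hadj (Or.inr ⟨Q, hQ, h1, h2, b1, b2⟩)
  have hsep : ∃ P ∈ t.splits, α ∈ P ∧ β ∉ P := by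
    by_contra hcon
    push_neg at hcon
    apply hadj
    left
    intro D hD
    constructor
    · exact fun hαD => hcon D hD hαD
    · intro hβD
      by_contra hαD
      have := hcon Dᶜ (t.compl_mem D hD) (Finset.mem_compl.mpr hαD)
      exact (Finset.mem_compl.mp this) hβD
  obtain ⟨P, hP, hPα, hPβ⟩ := hsep
  have hP' : P ∈ t'.splits := LTree.lemB t t' hαβ hαs hβs hna hP hPα hPβ
  apply LTree.ext'
  apply Finset.ext
  intro C
  constructor
  · intro hCt'
    by_cases hCa : α ∈ C <;> by_cases hCb : β ∈ C
    · have h1 : Cᶜ ∈ t.splits :=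
        LTree.lemA t t' hαβ hαs.symm hβs.symm hP' hPα hPβ (t'.compl_mem C hCt')
          (by simp [hCa]) (by simp [hCb])
      have := t.compl_mem _ h1
      rwa [compl_compl] at this
    · exact LTree.lemC t t' hαβ hαs hβs hna hP hPα hPβ hCt' hCa hCb
    · have h1 : Cᶜ ∈ t.splits :=
        LTree.lemC t t' hαβ hαs hβs hna hP hPα hPβ (t'.compl_mem C hCt')
          (Finset.mem_compl.mpr hCa) (by simp [hCb])
      have := t.compl_mem _ h1
      rwa [compl_compl] at this
    · exact LTree.lemA t t' hαβ hαs.symm hβs.symm hP' hPα hPβ hCt' hCa hCb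
  · intro hCt
    by_cases hCa : α ∈ C <;> by_cases hCb : β ∈ C
    · have h1 : Cᶜ ∈ t'.splits :=
        LTree.lemA t' t hαβ hαs hβs hP hPα hPβ (t.compl_mem C hCt)
          (by simp [hCa]) (by simp [hCb])
      have := t'.compl_mem _ h1
      rwa [compl_compl] at this
    · exact LTree.lemB t t' hαβ hαs hβs hna hCt hCa hCb
    · have h1 : Cᶜ ∈ t'.splits :=
        LTree.lemB t t' hαβ hαs hβs hna (t.compl_mem C hCt)
          (Finset.mem_compl.mpr hCa) (by simp [hCb])
      have := t'.compl_mem _ h1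
      rwa [compl_compl] at this
    · exact LTree.lemA t' t hαβ hαs hβs hP hPα hPβ hCt hCa hCb
end

section
/- For n ≥ 5, the Δ-set of leaf-labelled trees (T_n) is uniquely fillable in dimension n: given trees x_0,...,x_n ∈ T_{n-1} satisfying ∂_i(x_j) = ∂_{j-1}(x_i) for all 0 ≤ i < j ≤ n, there exists a unique tree y ∈ T_n with ∂_i(y) = x_i for all i. -/
set_option linter.unusedSectionVars false

/-!
Trees are encoded by their splits, and `∂_ν` deletes `ν` from every split and discards the
splits that become trivial. Keeping the labels `{0, …, n}` for the leaves of every `x_ν`, the face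
identities read `∂_{ν'} x_ν = ∂_ν x_{ν'}`.

A filler can only consist of sets `B` such that, whenever deleting `ν` leaves `B` a nontrivial
split, `B \ {ν}` is a split of `x_ν`. Any two such sets are compatible, since a leaf outside
four witnesses of their incompatibility can be deleted and `x_μ` is a tree. Each split `G` of
`x_μ` lifts to `G` or to `G ∪ {μ}`: if both failed, two leaves on the far side of `G` would
have to be attached next to the same set in one tree `x_ν`, which is incompatible. This needs a
side of `G` with three leaves, hence `n ≥ 5`. The same clash shows that a tree with at least
five leaves is determined by its faces.
-/

open Finset Function

namespace SplitSystem

variable {α β : Type*} [DecidableEq α] [DecidableEq β]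

def Compatible (U B C : Finset α) : Prop :=
  B ∩ C = ∅ ∨ B \ C = ∅ ∨ C \ B = ∅ ∨ U \ (B ∪ C) = ∅

theorem Compatible.false_of_mem_quadrants {U B C : Finset α} {a b c d : α}
    (h : Compatible U B C) (ha : a ∈ B ∩ C) (hb : b ∈ B \ C) (hc : c ∈ C \ B)
    (hd : d ∈ U \ (B ∪ C)) : False := by
  rcases h with h | h | h | h <;> simp_all

theorem Compatible.image {f : α → β} (hf : Injective f) {U B C : Finset α}
    (h : Compatible U B C) : Compatible (U.image f) (B.image f) (C.image f) := by
  simp only [Compatible, ← image_inter _ _ hf, ← image_sdiff _ _ hf, ← image_union,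
    image_eq_empty]
  exact h

theorem not_compatible_insert_insert {U X : Finset α} {a b c d : α} (hab : a ≠ b)
    (ha : a ∉ X) (hb : b ∉ X) (hc : c ∈ X) (hd : d ∈ U \ X) (hda : d ≠ a) (hdb : d ≠ b) :
    ¬ Compatible U (insert a X) (insert b X) := fun h =>
  h.false_of_mem_quadrants (a := c) (b := a) (c := b) (d := d) (by simp [hc])
    (by simp [hab, ha]) (by simp [hab.symm, hb]) (by simp_all)

/-- `S` is the set of splits of a tree with leaf set `U`, each split `G | U \ G` being recorded
by both of its sides. -/
structure IsTree (U : Finset α) (S : Finset (Finset α)) : Prop where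
  subset : ∀ G ∈ S, G ⊆ U
  two_le_card : ∀ G ∈ S, 2 ≤ #G
  two_le_card_sdiff : ∀ G ∈ S, 2 ≤ #(U \ G)
  sdiff_mem : ∀ G ∈ S, U \ G ∈ S
  compatible : ∀ G ∈ S, ∀ H ∈ S, Compatible U G H

theorem IsTree.image {U : Finset α} {S : Finset (Finset α)} (h : IsTree U S) {f : α → β}
    (hf : Injective f) : IsTree (U.image f) (S.image (Finset.image f)) where
  subset := by
    simp only [mem_image, forall_exists_index, and_imp]
    rintro _ G hG rfl
    exact image_subset_image (h.subset G hG)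
  two_le_card := by
    simp only [mem_image, forall_exists_index, and_imp]
    rintro _ G hG rfl
    rw [card_image_of_injective _ hf]
    exact h.two_le_card G hG
  two_le_card_sdiff := by
    simp only [mem_image, forall_exists_index, and_imp]
    rintro _ G hG rfl
    rw [← image_sdiff _ _ hf, card_image_of_injective _ hf]
    exact h.two_le_card_sdiff G hG
  sdiff_mem := by
    simp only [mem_image, forall_exists_index, and_imp]
    rintro _ G hG rfl
    exact ⟨U \ G, h.sdiff_mem G hG, image_sdiff _ _ hf⟩
  compatible := by
    simp only [mem_image, forall_exists_index, and_imp]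
    rintro _ G hG rfl _ H hH rfl
    exact (h.compatible G hG H hH).image hf

def SurvivesErase (U B : Finset α) (ν : α) : Prop :=
  2 ≤ #(B.erase ν) ∧ 2 ≤ #((U \ B).erase ν)

instance (U B : Finset α) (ν : α) : Decidable (SurvivesErase U B ν) :=
  inferInstanceAs (Decidable (_ ∧ _))

/-- The face `∂_ν` on split systems, keeping the original labels. -/
def eraseLeaf (U : Finset α) (S : Finset (Finset α)) (ν : α) : Finset (Finset α) :=
  {G ∈ S | SurvivesErase U G ν}.image (·.erase ν)

theorem mem_eraseLeaf {U : Finset α} {S : Finset (Finset α)} {ν : α} {G : Finset α} :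
    G ∈ eraseLeaf U S ν ↔ ∃ B ∈ S, SurvivesErase U B ν ∧ B.erase ν = G := by
  simp [eraseLeaf, and_assoc]

theorem mem_or_insert_mem_of_mem_eraseLeaf {U : Finset α} {S : Finset (Finset α)} {ν : α}
    {G : Finset α} (h : G ∈ eraseLeaf U S ν) : G ∈ S ∨ insert ν G ∈ S := by
  obtain ⟨B, hB, -, rfl⟩ := mem_eraseLeaf.1 h
  by_cases hν : ν ∈ B
  · exact Or.inr (by rwa [insert_erase hν])
  · exact Or.inl (by rwa [erase_eq_of_notMem hν])

theorem eraseLeaf_image {U : Finset α} {S : Finset (Finset α)} {f : α → β} (hf : Injective f)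
    (ν : α) : eraseLeaf (U.image f) (S.image (Finset.image f)) (f ν) =
      (eraseLeaf U S ν).image (Finset.image f) := by
  have hsurv : ∀ B, SurvivesErase (U.image f) (B.image f) (f ν) ↔ SurvivesErase U B ν := by
    intro B
    simp only [SurvivesErase, ← image_sdiff _ _ hf, ← image_erase hf,
      card_image_of_injective _ hf]
  ext G
  simp only [mem_eraseLeaf, mem_image, exists_exists_and_eq_and, hsurv]
  constructor
  · rintro ⟨B, hB, hBν, rfl⟩
    exact ⟨B.erase ν, ⟨B, hB, hBν, rfl⟩, image_erase hf B ν⟩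
  · rintro ⟨_, ⟨B, hB, hBν, rfl⟩, rfl⟩
    exact ⟨B, hB, hBν, (image_erase hf B ν).symm⟩

variable [Fintype α]

theorem compl_singleton_sdiff_erase (B : Finset α) (ν : α) : {ν}ᶜ \ B.erase ν = Bᶜ.erase ν := by
  ext
  simp only [mem_sdiff, mem_compl, mem_singleton, mem_erase]
  tauto

theorem card_compl_singleton_sdiff {G : Finset α} {ν : α} (h : ν ∉ G) :
    #({ν}ᶜ \ G) + #G + 1 = Fintype.card α := by
  have hG : G ⊆ {ν}ᶜ := fun a ha => by simpa using ne_of_mem_of_not_mem ha h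
  rw [card_sdiff_of_subset hG, card_compl, card_singleton]
  have := card_le_card hG
  rw [card_compl, card_singleton] at this
  have := Fintype.card_pos_iff.2 ⟨ν⟩
  omega

theorem survivesErase_univ_compl {B : Finset α} {ν : α} :
    SurvivesErase univ Bᶜ ν ↔ SurvivesErase univ B ν := by
  simp only [SurvivesErase, ← compl_eq_univ_sdiff, compl_compl, and_comm]

/-- The simplicial identities `∂_i x_j = ∂_{j-1} x_i`, written with the leaves of every
`x_ν` labelled by `α \ {ν}`, where they become symmetric in `ν` and `ν'`. -/
structure IsCompatibleFamily (S : α → Finset (Finset α)) : Prop where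
  isTree : ∀ ν, IsTree {ν}ᶜ (S ν)
  eraseLeaf_comm : ∀ ν ν', eraseLeaf {ν}ᶜ (S ν) ν' = eraseLeaf {ν'}ᶜ (S ν') ν

variable {S : α → Finset (Finset α)}

theorem IsCompatibleFamily.notMem (hS : IsCompatibleFamily S) {μ : α} {G : Finset α}
    (hG : G ∈ S μ) : μ ∉ G := fun h => by simpa using (hS.isTree μ).subset G hG h

theorem IsCompatibleFamily.erase_mem_or_insert_erase_mem (hS : IsCompatibleFamily S)
    {μ ν : α} {G : Finset α} (hG : G ∈ S μ) (hGν : SurvivesErase {μ}ᶜ G ν) :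
    G.erase ν ∈ S ν ∨ insert μ (G.erase ν) ∈ S ν :=
  mem_or_insert_mem_of_mem_eraseLeaf <| hS.eraseLeaf_comm μ ν ▸ mem_eraseLeaf.2 ⟨G, hG, hGν, rfl⟩

def Admissible (S : α → Finset (Finset α)) (B : Finset α) : Prop :=
  ∀ ν, SurvivesErase univ B ν → B.erase ν ∈ S ν

instance : DecidablePred (Admissible S) := fun _ => inferInstanceAs (Decidable (∀ _, _))

theorem Admissible.compl (hS : ∀ ν, IsTree {ν}ᶜ (S ν)) {B : Finset α} (hB : Admissible S B) :
    Admissible S Bᶜ := by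
  intro ν hν
  rw [← compl_singleton_sdiff_erase]
  exact (hS ν).sdiff_mem _ (hB ν (survivesErase_univ_compl.1 hν))

section Lift

variable {μ : α} {G : Finset α}

theorem IsCompatibleFamily.insert_erase_mem_of_erase_notMem (hS : IsCompatibleFamily S)
    (hG : G ∈ S μ) (hR : 3 ≤ #({μ}ᶜ \ G)) {ν : α} (hν : 2 ≤ #(G.erase ν))
    (hνG : G.erase ν ∉ S ν) : insert μ (G.erase ν) ∈ S ν := by
  refine (hS.erase_mem_or_insert_erase_mem hG ⟨hν, ?_⟩).resolve_left hνG
  have := pred_card_le_card_erase (s := {μ}ᶜ \ G) (a := ν)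
  omega

theorem IsCompatibleFamily.insert_mem_of_erase_notMem (hS : IsCompatibleFamily S)
    (hG : G ∈ S μ) (hR : 3 ≤ #({μ}ᶜ \ G)) {ν : α} (hν : 2 ≤ #(G.erase ν))
    (hνG : G.erase ν ∉ S ν) {σ : α} (hσ : σ ∈ {μ}ᶜ \ G) : insert μ G ∈ S σ := by
  have hμG := hS.notMem hG
  have hσG : σ ∉ G := (mem_sdiff.1 hσ).2
  have hσμ : σ ≠ μ := by simpa using (mem_sdiff.1 hσ).1
  have hGσ : G.erase σ = G := erase_eq_of_notMem hσG
  have hσR := pred_card_le_card_erase (s := {μ}ᶜ \ G) (a := σ)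
  have hcard := card_compl_singleton_sdiff hμG
  have hsurv : SurvivesErase {μ}ᶜ G σ := by
    rw [SurvivesErase, hGσ]
    exact ⟨(hS.isTree μ).two_le_card G hG, by omega⟩
  have hσS := hS.erase_mem_or_insert_erase_mem hG hsurv
  rw [hGσ] at hσS
  refine hσS.resolve_left fun hGσS => ?_
  -- transported to the `ν`-th tree, `G` would sit beside both `μ` and `σ`
  have hsurv' : SurvivesErase {σ}ᶜ G ν := by
    have := card_compl_singleton_sdiff hσG
    have := pred_card_le_card_erase (s := {σ}ᶜ \ G) (a := ν)
    exact ⟨hν, by omega⟩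
  obtain ⟨d, hdR, hd⟩ := exists_mem_notMem_of_card_lt_card
    (s := {σ, ν}) (t := {μ}ᶜ \ G) (card_le_two.trans_lt (by omega))
  obtain ⟨c, hc⟩ : (G.erase ν).Nonempty := card_pos.1 (by omega)
  refine not_compatible_insert_insert (U := {ν}ᶜ) (d := d) hσμ.symm (by simp [hμG])
    (by simp [hσG]) hc (by simp_all) (by simp_all) (by simp_all) <|
    (hS.isTree ν).compatible _ (hS.insert_erase_mem_of_erase_notMem hG hR hν hνG) _ ?_
  exact (hS.erase_mem_or_insert_erase_mem hGσS hsurv').resolve_left hνG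

theorem IsCompatibleFamily.erase_insert_mem_of_forall_insert_mem (hS : IsCompatibleFamily S)
    (hG : G ∈ S μ) (hR : 3 ≤ #({μ}ᶜ \ G)) (hins : ∀ σ ∈ {μ}ᶜ \ G, insert μ G ∈ S σ) {ν : α}
    (hνG : ν ∈ G) : (insert μ G).erase ν ∈ S ν := by
  have hμG := hS.notMem hG
  have hcard := card_compl_singleton_sdiff hμG
  have hG2 := (hS.isTree μ).two_le_card G hG
  have hμν : μ ≠ ν := (ne_of_mem_of_not_mem hνG hμG).symm
  have hsurv : ∀ σ ∈ {μ}ᶜ \ G, SurvivesErase {σ}ᶜ (insert μ G) ν := by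
    intro σ hσ
    have hσ' : σ ∉ insert μ G := by simp_all
    have := card_compl_singleton_sdiff hσ'
    have hν' : ν ∉ {σ}ᶜ \ insert μ G := by simp [hνG]
    rw [card_insert_of_notMem hμG] at this
    rw [SurvivesErase, erase_eq_of_notMem hν', erase_insert_of_ne hμν,
      card_insert_of_notMem (by simp [hμG]), card_erase_of_mem hνG]
    omega
  obtain ⟨σ₁, hσ₁, σ₂, hσ₂, hσ₁₂⟩ := one_lt_card.1 (show 1 < #({μ}ᶜ \ G) by omega)
  obtain ⟨d, hdR, hd⟩ := exists_mem_notMem_of_card_lt_card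
    (s := {σ₁, σ₂}) (t := {μ}ᶜ \ G) (card_le_two.trans_lt (by omega))
  by_contra hνS
  have hins' : ∀ σ ∈ {μ}ᶜ \ G, insert σ ((insert μ G).erase ν) ∈ S ν := fun σ hσ =>
    (hS.erase_mem_or_insert_erase_mem (hins σ hσ) (hsurv σ hσ)).resolve_left hνS
  have hdν : d ≠ ν := ne_of_mem_of_not_mem hνG (mem_sdiff.1 hdR).2 |>.symm
  -- two leaves of the far side of `G` cannot both be attached next to `G ∪ {μ}`
  refine not_compatible_insert_insert (U := {ν}ᶜ) (c := μ) (d := d) hσ₁₂ (by simp_all)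
    (by simp_all) (by simp_all) (by simp_all) (by simp_all)
    (by simp_all) <| (hS.isTree ν).compatible _ (hins' σ₁ hσ₁) _ (hins' σ₂ hσ₂)

theorem IsCompatibleFamily.exists_admissible_erase_eq_of_three_le (hS : IsCompatibleFamily S)
    (hG : G ∈ S μ) (hR : 3 ≤ #({μ}ᶜ \ G)) : ∃ B, B.erase μ = G ∧ Admissible S B := by
  have hμG := hS.notMem hG
  suffices Admissible S G ∨ Admissible S (insert μ G) by
    rcases this with h | h
    · exact ⟨G, erase_eq_of_notMem hμG, h⟩
    · exact ⟨insert μ G, erase_insert hμG, h⟩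
  by_contra! h
  simp only [Admissible, not_forall] at h
  obtain ⟨⟨ν, hν, hνG⟩, ⟨ν', -, hν'G⟩⟩ := h
  have hins : ∀ σ ∈ {μ}ᶜ \ G, insert μ G ∈ S σ := fun σ hσ =>
    hS.insert_mem_of_erase_notMem hG hR hν.1 hνG hσ
  by_cases hν' : ν' ∈ G
  · exact hν'G (hS.erase_insert_mem_of_forall_insert_mem hG hR hins hν')
  · have hν'μ : ν' ≠ μ := by
      rintro rfl
      exact hν'G (by rwa [erase_insert hμG])
    rw [erase_eq_of_notMem (by simp [hν'μ, hν'])] at hν'G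
    exact hν'G (hins ν' (by simp [hν'μ, hν']))

end Lift

theorem IsCompatibleFamily.exists_admissible_erase_eq (hS : IsCompatibleFamily S)
    (hα : 6 ≤ Fintype.card α) {μ : α} {G : Finset α} (hG : G ∈ S μ) :
    ∃ B, B.erase μ = G ∧ Admissible S B := by
  have hcard := card_compl_singleton_sdiff (hS.notMem hG)
  by_cases hR : 3 ≤ #({μ}ᶜ \ G)
  · exact hS.exists_admissible_erase_eq_of_three_le hG hR
  -- otherwise the other side of the split is large: lift it and take the complement
  have hGμ := (hS.isTree μ).subset G hG
  obtain ⟨C, hC, hCS⟩ := hS.exists_admissible_erase_eq_of_three_le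
    ((hS.isTree μ).sdiff_mem G hG) (by rw [Finset.sdiff_sdiff_eq_self hGμ]; omega)
  refine ⟨Cᶜ, ?_, hCS.compl hS.isTree⟩
  rw [← compl_singleton_sdiff_erase, hC, Finset.sdiff_sdiff_eq_self hGμ]

theorem compatible_of_admissible (hS : ∀ ν, IsTree {ν}ᶜ (S ν)) (hα : 5 ≤ Fintype.card α)
    {B C : Finset α} (hB : Admissible S B) (hC : Admissible S C) : Compatible univ B C := by
  by_contra h
  simp only [Compatible, not_or, ← nonempty_iff_ne_empty] at h
  obtain ⟨⟨a, ha⟩, ⟨b, hb⟩, ⟨c, hc⟩, ⟨d, hd⟩⟩ := h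
  -- deleting a fifth leaf `μ` keeps all four quadrants nonempty
  obtain ⟨μ, -, hμ⟩ := exists_mem_notMem_of_card_lt_card (s := {a, b, c, d}) (t := univ)
    (card_le_four.trans_lt (by rw [card_univ]; omega))
  simp only [mem_inter, mem_sdiff, mem_union, mem_univ, true_and, not_or] at ha hb hc hd
  simp only [mem_insert, mem_singleton, not_or] at hμ
  obtain ⟨hμa, hμb, hμc, hμd⟩ := hμ
  have hab : a ≠ b := ne_of_mem_of_not_mem ha.2 hb.2
  have hcd : c ≠ d := ne_of_mem_of_not_mem hc.1 hd.2
  have hac : a ≠ c := ne_of_mem_of_not_mem ha.1 hc.2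
  have hbd : b ≠ d := ne_of_mem_of_not_mem hb.1 hd.1
  have hBμ := hB μ ⟨one_lt_card.2 ⟨a, by simp [ha, Ne.symm hμa], b, by simp [hb, Ne.symm hμb], hab⟩,
    one_lt_card.2 ⟨c, by simp [hc, Ne.symm hμc], d, by simp [hd, Ne.symm hμd], hcd⟩⟩
  have hCμ := hC μ ⟨one_lt_card.2 ⟨a, by simp [ha, Ne.symm hμa], c, by simp [hc, Ne.symm hμc], hac⟩,
    one_lt_card.2 ⟨b, by simp [hb, Ne.symm hμb], d, by simp [hd, Ne.symm hμd], hbd⟩⟩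
  exact ((hS μ).compatible _ hBμ _ hCμ).false_of_mem_quadrants (a := a) (b := b) (c := c)
    (d := d) (by simp [ha, Ne.symm hμa]) (by simp [hb, Ne.symm hμb])
    (by simp [hc, Ne.symm hμc]) (by simp [hd, Ne.symm hμd])

def fillerSplits (S : α → Finset (Finset α)) : Finset (Finset α) :=
  {B | 2 ≤ #B ∧ 2 ≤ #Bᶜ ∧ Admissible S B}

theorem mem_fillerSplits_of_survivesErase {B : Finset α} {ν : α} (hB : Admissible S B)
    (hBν : SurvivesErase univ B ν) : B ∈ fillerSplits S := by
  rw [SurvivesErase, ← compl_eq_univ_sdiff] at hBν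
  exact mem_filter.2 ⟨mem_univ _, hBν.1.trans card_erase_le, hBν.2.trans card_erase_le, hB⟩

theorem isTree_fillerSplits (hS : ∀ ν, IsTree {ν}ᶜ (S ν)) (hα : 5 ≤ Fintype.card α) :
    IsTree univ (fillerSplits S) where
  subset _ _ := subset_univ _
  two_le_card _ hB := (mem_filter.1 hB).2.1
  two_le_card_sdiff B hB := by
    rw [← compl_eq_univ_sdiff]
    exact (mem_filter.1 hB).2.2.1
  sdiff_mem B hB := by
    obtain ⟨-, h1, h2, h3⟩ := mem_filter.1 hB
    rw [← compl_eq_univ_sdiff]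
    exact mem_filter.2 ⟨mem_univ _, h2, by rwa [compl_compl], h3.compl hS⟩
  compatible _ hB _ hC :=
    compatible_of_admissible hS hα (mem_filter.1 hB).2.2.2 (mem_filter.1 hC).2.2.2

theorem IsCompatibleFamily.eraseLeaf_fillerSplits (hS : IsCompatibleFamily S)
    (hα : 6 ≤ Fintype.card α) (μ : α) : eraseLeaf univ (fillerSplits S) μ = S μ := by
  ext G
  rw [mem_eraseLeaf]
  constructor
  · rintro ⟨B, hB, hBμ, rfl⟩
    exact (mem_filter.1 hB).2.2.2 μ hBμ
  · intro hG
    obtain ⟨B, rfl, hB⟩ := hS.exists_admissible_erase_eq hα hG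
    have hBμ : SurvivesErase univ B μ := by
      rw [SurvivesErase, ← compl_eq_univ_sdiff, ← compl_singleton_sdiff_erase]
      exact ⟨(hS.isTree μ).two_le_card _ hG, (hS.isTree μ).two_le_card_sdiff _ hG⟩
    exact ⟨B, mem_fillerSplits_of_survivesErase hB hBμ, hBμ, rfl⟩

end SplitSystem

theorem Fin.val_succAbove_eq_ite {n : ℕ} (p : Fin (n + 1)) (a : Fin n) :
    (p.succAbove a : ℕ) = if (a : ℕ) < p then (a : ℕ) else (a : ℕ) + 1 := by
  rw [Fin.succAbove]
  split_ifs <;> simp_all [Fin.lt_def]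

theorem Fin.succAbove_mk_of_lt {n i j : ℕ} (hij : i < j) (hj : j ≤ n + 2) :
    (⟨j, by omega⟩ : Fin (n + 3)).succAbove ⟨i, by omega⟩ = ⟨i, by omega⟩ := by
  ext
  simp [Fin.val_succAbove_eq_ite, hij]

theorem Fin.succAbove_mk_sub_one_of_lt {n i j : ℕ} (hij : i < j) (hj : j ≤ n + 2) :
    (⟨i, by omega⟩ : Fin (n + 3)).succAbove ⟨j - 1, by omega⟩ = ⟨j, by omega⟩ := by
  ext
  simp only [Fin.val_succAbove_eq_ite]
  split_ifs <;> omega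

theorem Fin.succAbove_comp_succAbove_mk {n i j : ℕ} (hij : i < j) (hj : j ≤ n + 2) :
    (⟨j, by omega⟩ : Fin (n + 3)).succAbove ∘ (⟨i, by omega⟩ : Fin (n + 2)).succAbove =
      (⟨i, by omega⟩ : Fin (n + 3)).succAbove ∘ (⟨j - 1, by omega⟩ : Fin (n + 2)).succAbove := by
  funext a
  ext
  simp only [Function.comp_apply, Fin.val_succAbove_eq_ite]
  split_ifs <;> omega

namespace LTree

open SplitSystem

variable {α β γ : Type*} [Fintype α] [DecidableEq α] [Fintype β] [DecidableEq β] [DecidableEq γ]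

theorem compatible_univ_iff {B C : Finset α} : Compatible univ B C ↔
    B ∩ C = ∅ ∨ B ∩ Cᶜ = ∅ ∨ Bᶜ ∩ C = ∅ ∨ Bᶜ ∩ Cᶜ = ∅ := by
  simp only [Compatible, compl_union, sdiff_eq_inter_compl, inter_comm C, univ_inter]

theorem isTree (t : LTree α) : IsTree univ t.splits where
  subset _ _ := subset_univ _
  two_le_card := t.two_le
  two_le_card_sdiff B hB := by
    rw [← compl_eq_univ_sdiff]
    exact t.two_le_compl B hB
  sdiff_mem B hB := by
    rw [← compl_eq_univ_sdiff]
    exact t.compl_mem B hB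
  compatible B hB C hC := compatible_univ_iff.2 (t.compat B hB C hC)

def ofIsTree {S : Finset (Finset α)} (h : IsTree univ S) : LTree α where
  splits := S
  compl_mem B hB := by
    rw [compl_eq_univ_sdiff]
    exact h.sdiff_mem B hB
  two_le := h.two_le_card
  two_le_compl B hB := by
    rw [compl_eq_univ_sdiff]
    exact h.two_le_card_sdiff B hB
  compat B hB C hC := compatible_univ_iff.1 (h.compatible B hB C hC)

theorem mem_splits_of_eraseLeaf_eq {t t' : LTree α}
    (h : ∀ ν, eraseLeaf univ t.splits ν = eraseLeaf univ t'.splits ν) {B : Finset α}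
    (hB : B ∈ t.splits) (hBc : 3 ≤ #Bᶜ) : B ∈ t'.splits := by
  have hlift : ∀ μ ∈ Bᶜ, B ∈ t'.splits ∨ insert μ B ∈ t'.splits := by
    intro μ hμ
    have hμB : μ ∉ B := mem_compl.1 hμ
    refine mem_or_insert_mem_of_mem_eraseLeaf (h μ ▸ mem_eraseLeaf.2 ⟨B, hB, ?_, ?_⟩)
    · rw [SurvivesErase, erase_eq_of_notMem hμB, ← compl_eq_univ_sdiff, card_erase_of_mem hμ]
      exact ⟨t.two_le B hB, by omega⟩
    · exact erase_eq_of_notMem hμB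
  obtain ⟨σ₁, hσ₁, σ₂, hσ₂, hσ₁₂⟩ := one_lt_card.1 (show 1 < #Bᶜ by omega)
  obtain ⟨d, hdB, hd⟩ := exists_mem_notMem_of_card_lt_card (s := {σ₁, σ₂}) (t := Bᶜ)
    (card_le_two.trans_lt (by omega))
  obtain ⟨c, hc⟩ := card_pos.1 (show 0 < #B by have := t.two_le B hB; omega)
  rcases hlift σ₁ hσ₁ with h₁ | h₁
  · exact h₁
  rcases hlift σ₂ hσ₂ with h₂ | h₂
  · exact h₂
  simp only [mem_insert, mem_singleton, not_or] at hd
  exact absurd (t'.isTree.compatible _ h₁ _ h₂) <| not_compatible_insert_insert hσ₁₂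
    (mem_compl.1 hσ₁) (mem_compl.1 hσ₂) hc (by simpa using hdB) hd.1 hd.2

theorem eq_of_eraseLeaf_eq (hα : 5 ≤ Fintype.card α) {t t' : LTree α}
    (h : ∀ ν, eraseLeaf univ t.splits ν = eraseLeaf univ t'.splits ν) : t = t' := by
  have hsub : ∀ {t t' : LTree α}, (∀ ν, eraseLeaf univ t.splits ν = eraseLeaf univ t'.splits ν) →
      t.splits ⊆ t'.splits := by
    intro t t' h B hB
    by_cases hBc : 3 ≤ #Bᶜ
    · exact mem_splits_of_eraseLeaf_eq h hB hBc
    have hcard := card_compl B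
    have := card_le_univ B
    have := t.two_le B hB
    simpa using t'.compl_mem _
      (mem_splits_of_eraseLeaf_eq h (t.compl_mem B hB) (by rw [compl_compl]; omega))
  exact ext' ((hsub h).antisymm (hsub fun ν => (h ν).symm))

theorem image_splits_relabel (t : LTree α) (e : α ≃ β) (f : β → γ) :
    (t.relabel e).splits.image (image f) = t.splits.image (image (f ∘ e)) := by
  simp only [relabel, image_image]
  congr 1
  funext C
  exact image_image

theorem image_val_subtype_ne (C : Finset α) (p : α) :
    (C.subtype (· ≠ p)).image Subtype.val = C.erase p := by
  ext a
  simp [and_comm]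

theorem image_splits_del (t : LTree α) (p : α) :
    (t.del p).splits.image (image Subtype.val) = eraseLeaf univ t.splits p := by
  ext G
  have hcard : ∀ C : Finset α, #(C.subtype (· ≠ p)) = #(C.erase p) := fun C => by
    rw [← image_val_subtype_ne, card_image_of_injective _ Subtype.val_injective]
  simp only [del, mem_image, mem_filter, mem_eraseLeaf, SurvivesErase, ← compl_eq_univ_sdiff]
  constructor
  · rintro ⟨_, ⟨⟨B, hB, rfl⟩, h1, h2⟩, rfl⟩
    rw [hcard] at h1
    rw [subtype_compl, hcard] at h2
    exact ⟨B, hB, ⟨h1, h2⟩, (image_val_subtype_ne B p).symm⟩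
  · rintro ⟨B, hB, ⟨h1, h2⟩, rfl⟩
    refine ⟨_, ⟨⟨B, hB, rfl⟩, ?_, ?_⟩, image_val_subtype_ne B p⟩
    · rwa [hcard]
    · rwa [subtype_compl, hcard]

theorem image_splits_face {n : ℕ} (t : LTree (Fin (n + 2))) (p : Fin (n + 2)) :
    (face p t).splits.image (image p.succAbove) = eraseLeaf univ t.splits p := by
  rw [face, image_splits_relabel, ← image_splits_del]
  congr 2
  funext a
  exact congrArg Subtype.val ((finSuccAboveEquiv p).apply_symm_apply a)

theorem face_eq_iff {n : ℕ} {t : LTree (Fin (n + 2))} {p : Fin (n + 2)} {s : LTree (Fin (n + 1))} :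
    face p t = s ↔ eraseLeaf univ t.splits p = s.splits.image (image p.succAbove) := by
  rw [← image_splits_face]
  exact ⟨fun h => h ▸ rfl,
    fun h => ext' (image_injective (image_injective Fin.succAbove_right_injective) h)⟩

theorem eraseLeaf_image_splits_succAbove {n : ℕ} (t : LTree (Fin (n + 2))) (ν : Fin (n + 3))
    (p : Fin (n + 2)) : eraseLeaf {ν}ᶜ (t.splits.image (image ν.succAbove)) (ν.succAbove p) =
      (face p t).splits.image (image (ν.succAbove ∘ p.succAbove)) := by
  rw [← Fin.image_succAbove_univ, eraseLeaf_image Fin.succAbove_right_injective,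
    ← image_splits_face, image_image]
  congr 1
  funext C
  exact image_image

theorem isCompatibleFamily_of_face_eq {n : ℕ} (x : Fin (n + 3) → LTree (Fin (n + 2)))
    (hx : ∀ (i j : ℕ) (hij : i < j) (hj : j ≤ n + 2),
      face ⟨i, by omega⟩ (x ⟨j, by omega⟩) = face ⟨j - 1, by omega⟩ (x ⟨i, by omega⟩)) :
    IsCompatibleFamily fun ν => (x ν).splits.image (image ν.succAbove) := by
  refine ⟨fun ν => ?_, ?_⟩
  · rw [← Fin.image_succAbove_univ]
    exact (x ν).isTree.image Fin.succAbove_right_injective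
  have key : ∀ ν ν' : Fin (n + 3), ν < ν' →
      eraseLeaf {ν'}ᶜ ((x ν').splits.image (image ν'.succAbove)) ν =
        eraseLeaf {ν}ᶜ ((x ν).splits.image (image ν.succAbove)) ν' := by
    rintro ⟨i, hi⟩ ⟨j, hj⟩ (hij : i < j)
    conv_lhs => rw [← Fin.succAbove_mk_of_lt hij (by omega)]
    conv_rhs => rw [← Fin.succAbove_mk_sub_one_of_lt hij (by omega)]
    rw [eraseLeaf_image_splits_succAbove, eraseLeaf_image_splits_succAbove, hx i j hij (by omega),
      Fin.succAbove_comp_succAbove_mk hij (by omega)]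
  intro ν ν'
  rcases lt_trichotomy ν ν' with h | rfl | h
  · exact (key ν ν' h).symm
  · rfl
  · exact key ν' ν h

end LTree

/-- For `n = m + 5 ≥ 5` the Δ-set of leaf-labelled trees is
uniquely fillable in dimension `n`: given `x₀, …, x_n ∈ T_{n-1}` with
`∂_i (x j) = ∂_{j-1} (x i)` for all `i < j`, there is a unique `y ∈ T_n`
with `∂_i y = x i` for all `i`. -/
theorem trees_uniquely_fillable (m : ℕ) (x : Fin (m + 6) → LTree (Fin (m + 5)))
    (hcompat : ∀ (i j : ℕ) (hij : i < j) (hj : j ≤ m + 5),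
      LTree.face ⟨i, by omega⟩ (x ⟨j, by omega⟩) =
        LTree.face ⟨j - 1, by omega⟩ (x ⟨i, by omega⟩)) :
    ∃! y : LTree (Fin (m + 6)), ∀ k : Fin (m + 6), LTree.face k y = x k := by
  have hS := LTree.isCompatibleFamily_of_face_eq x hcompat
  have hα : 6 ≤ Fintype.card (Fin (m + 6)) := by simp
  refine ⟨LTree.ofIsTree (SplitSystem.isTree_fillerSplits hS.isTree (by omega)),
    fun k => LTree.face_eq_iff.2 (hS.eraseLeaf_fillerSplits hα k),
    fun y hy => LTree.eq_of_eraseLeaf_eq (by omega) fun k => ?_⟩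
  rw [LTree.face_eq_iff.1 (hy k), ← hS.eraseLeaf_fillerSplits hα k]
  rfl
end

section
/- Let t be a tree without bivalent vertices with at least 7 leaves (labelled by a set A with |A| ≥ 7) that contains two leaves α and β whose attachment vertices are separated by at least 4 internal vertices along the path between them. Then for every label μ ∈ A \ {α, β}, the leaves α and β are non-adjacent in the tree ∂_μ t. -/
set_option linter.unusedSectionVars false

section Aux

variable {A : Type*} [Fintype A] [DecidableEq A]

private lemma two_le_of_mem_mem {s : Finset A} {x y : A} (hx : x ∈ s) (hy : y ∈ s)
    (hxy : x ≠ y) : 2 ≤ s.card :=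
  Finset.one_lt_card.mpr ⟨x, hx, y, hy, hxy⟩

private lemma two_le_erase {s : Finset A} {μ x y : A} (hx : x ∈ s) (hy : y ∈ s)
    (hxμ : x ≠ μ) (hyμ : y ≠ μ) (hxy : x ≠ y) : 2 ≤ (s.erase μ).card :=
  two_le_of_mem_mem (Finset.mem_erase.mpr ⟨hxμ, hx⟩) (Finset.mem_erase.mpr ⟨hyμ, hy⟩) hxy

private lemma not_mem_of_inter_empty {S T : Finset A} (h : S ∩ T = ∅) {a : A}
    (ha : a ∈ S) (ha' : a ∈ T) : False := by
  have : a ∈ S ∩ T := Finset.mem_inter.mpr ⟨ha, ha'⟩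
  simp [h] at this

private lemma comparable_of_sep (t : LTree A) {C C' : Finset A} (hC : C ∈ t.splits)
    (hC' : C' ∈ t.splits) {a b : A} (haC : a ∈ C) (haC' : a ∈ C')
    (hbC : b ∉ C) (hbC' : b ∉ C') : C ⊆ C' ∨ C' ⊆ C := by
  rcases t.compat C hC C' hC' with h | h | h | h
  · exact (not_mem_of_inter_empty h haC haC').elim
  · left; intro x hx; by_contra hx'
    exact not_mem_of_inter_empty h hx (Finset.mem_compl.mpr hx')
  · right; intro x hx; by_contra hx'
    exact not_mem_of_inter_empty h (Finset.mem_compl.mpr hx') hx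
  · exact (not_mem_of_inter_empty h (Finset.mem_compl.mpr hbC) (Finset.mem_compl.mpr hbC')).elim

/-- If two distinct splits both separate `a` from `b`, then no split satisfying
the second adjacency condition can exist. -/
private lemma no_adj_pair (t : LTree A) {a b : A} {D0 D1 : Finset A}
    (hD0 : D0 ∈ t.splits) (hD1 : D1 ∈ t.splits) (hne : D0 ≠ D1)
    (haD0 : a ∈ D0) (hbD0 : b ∉ D0) (haD1 : a ∈ D1) (hbD1 : b ∉ D1)
    (hB1 : t.Block (D0.erase a)) (hB2 : t.Block (D0ᶜ.erase b)) : False := by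
  rcases comparable_of_sep t hD0 hD1 haD0 haD1 hbD0 hbD1 with hsub | hsub
  · -- D0 ⊊ D1 : use the block D0ᶜ.erase b
    obtain ⟨x, hxD1, hxD0⟩ := Finset.exists_of_ssubset (hsub.ssubset_of_ne hne)
    have hx_b : x ≠ b := fun h => hbD1 (h ▸ hxD1)
    have hsubc : D1ᶜ ⊆ D0ᶜ := fun y hy =>
      Finset.mem_compl.mpr (fun h => Finset.mem_compl.mp hy (hsub h))
    obtain ⟨y, hyD1c, hyb⟩ := Finset.exists_mem_ne
      (lt_of_lt_of_le one_lt_two (t.two_le_compl D1 hD1)) b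
    have hyE : y ∈ D0ᶜ.erase b := Finset.mem_erase.mpr ⟨hyb, hsubc hyD1c⟩
    have hxE : x ∈ D0ᶜ.erase b := Finset.mem_erase.mpr ⟨hx_b, Finset.mem_compl.mpr hxD0⟩
    rcases hB2 with hcard | hsplit
    · have : 2 ≤ (D0ᶜ.erase b).card :=
        two_le_of_mem_mem hxE hyE (fun h => Finset.mem_compl.mp hyD1c (h ▸ hxD1))
      omega
    · rcases t.compat _ hsplit D1 hD1 with h | h | h | h
      · exact not_mem_of_inter_empty h hxE hxD1
      · exact not_mem_of_inter_empty h hyE hyD1c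
      · refine not_mem_of_inter_empty h (Finset.mem_compl.mpr ?_) haD1
        intro hmem
        exact Finset.mem_compl.mp (Finset.mem_of_mem_erase hmem) haD0
      · exact not_mem_of_inter_empty h
          (Finset.mem_compl.mpr (Finset.notMem_erase b _)) (Finset.mem_compl.mpr hbD1)
  · -- D1 ⊊ D0 : use the block D0.erase a
    obtain ⟨x, hxD0, hxD1⟩ := Finset.exists_of_ssubset (hsub.ssubset_of_ne hne.symm)
    have hx_a : x ≠ a := fun h => hxD1 (h ▸ haD1)
    obtain ⟨z, hzD1, hza⟩ := Finset.exists_mem_ne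
      (lt_of_lt_of_le one_lt_two (t.two_le D1 hD1)) a
    rcases hB1 with hcard | hsplit
    · have h1 : (D0.erase a).card = D0.card - 1 := Finset.card_erase_of_mem haD0
      have h2 : 2 ≤ D0.card := t.two_le D0 hD0
      have h3 : D0.card ≤ D1.card := by
        have := t.two_le D1 hD1; omega
      exact hne.symm (Finset.eq_of_subset_of_card_le hsub h3)
    · rcases t.compat _ hsplit D1 hD1 with h | h | h | h
      · exact not_mem_of_inter_empty h (Finset.mem_erase.mpr ⟨hza, hsub hzD1⟩) hzD1
      · exact not_mem_of_inter_empty h (Finset.mem_erase.mpr ⟨hx_a, hxD0⟩)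
          (Finset.mem_compl.mpr hxD1)
      · exact not_mem_of_inter_empty h (Finset.mem_compl.mpr (Finset.notMem_erase a _)) haD1
      · refine not_mem_of_inter_empty h (Finset.mem_compl.mpr ?_) (Finset.mem_compl.mpr hbD1)
        intro hmem
        exact hbD0 (Finset.mem_of_mem_erase hmem)

private lemma card_fsubtype (S : Finset A) (μ : A) :
    (S.subtype (· ≠ μ)).card = (S.erase μ).card := by
  rw [Finset.card_subtype]
  congr 1
  ext a
  simp [Finset.mem_erase, and_comm]

private lemma fsubtype_compl (μ : A) (S : Finset A) :
    (S.subtype (· ≠ μ))ᶜ = Sᶜ.subtype (· ≠ μ) := by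
  ext a
  simp [Finset.mem_subtype]

private lemma mem_del_splits (t : LTree A) (μ : A) {C : Finset A} (hC : C ∈ t.splits)
    (hc1 : 2 ≤ (C.erase μ).card) (hc2 : 2 ≤ (Cᶜ.erase μ).card) :
    C.subtype (· ≠ μ) ∈ (t.del μ).splits := by
  simp only [LTree.del, Finset.mem_filter, Finset.mem_image]
  refine ⟨⟨C, hC, rfl⟩, ?_, ?_⟩
  · rwa [card_fsubtype]
  · rwa [fsubtype_compl, card_fsubtype]

private lemma fsubtype_inj {μ : A} {C C' : Finset A} (hμ : μ ∈ C ↔ μ ∈ C')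
    (h : C.subtype (· ≠ μ) = C'.subtype (· ≠ μ)) : C = C' := by
  ext a
  by_cases ha : a = μ
  · subst ha; exact hμ
  · have := Finset.ext_iff.mp h ⟨a, ha⟩
    simpa [Finset.mem_subtype] using this

private lemma key (t : LTree A) {α β μ : A} (h1 : α ≠ μ) (h2 : β ≠ μ)
    {C1 C2 C3 : Finset A}
    (hC1 : C1 ∈ t.splits) (hC2 : C2 ∈ t.splits) (hC3 : C3 ∈ t.splits)
    (hα1 : α ∈ C1) (hβ1 : β ∉ C1) (hα2 : α ∈ C2) (hβ2 : β ∉ C2)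
    (hα3 : α ∈ C3) (hβ3 : β ∉ C3)
    (hs12 : C1 ⊂ C2) (hs23 : C2 ⊂ C3) :
    ∃ D ∈ (t.del μ).splits, ∃ D' ∈ (t.del μ).splits, D ≠ D' ∧
      (⟨α, h1⟩ : {a : A // a ≠ μ}) ∈ D ∧ (⟨β, h2⟩ : {a : A // a ≠ μ}) ∉ D ∧
      (⟨α, h1⟩ : {a : A // a ≠ μ}) ∈ D' ∧ (⟨β, h2⟩ : {a : A // a ≠ μ}) ∉ D' := by
  have compl_sub : ∀ {X Y : Finset A}, X ⊆ Y → Yᶜ ⊆ Xᶜ := fun hXY y hy =>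
    Finset.mem_compl.mpr (fun h => Finset.mem_compl.mp hy (hXY h))
  by_cases hμ1 : μ ∈ C1
  · have hμ2 : μ ∈ C2 := hs12.subset hμ1
    have hμ3 : μ ∈ C3 := hs23.subset hμ2
    obtain ⟨w, hw2, hw1⟩ := Finset.exists_of_ssubset hs12
    obtain ⟨w', hw3, hw2'⟩ := Finset.exists_of_ssubset hs23
    refine ⟨_, mem_del_splits t μ hC2 ?_ ?_, _, mem_del_splits t μ hC3 ?_ ?_, ?_, ?_, ?_, ?_, ?_⟩
    · exact two_le_erase hα2 hw2 h1 (fun h => hw1 (h ▸ hμ1)) (fun h => hw1 (h ▸ hα1))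
    · refine le_trans (t.two_le_compl C3 hC3) (Finset.card_le_card ?_)
      intro y hy
      exact Finset.mem_erase.mpr ⟨fun h => Finset.mem_compl.mp hy (h ▸ hμ3),
        compl_sub hs23.subset hy⟩
    · exact two_le_erase hα3 hw3 h1 (fun h => hw2' (h ▸ hμ2)) (fun h => hw2' (h ▸ hα2))
    · rw [Finset.erase_eq_of_notMem (by simp [hμ3])]
      exact t.two_le_compl C3 hC3
    · exact fun h => hs23.ne (fsubtype_inj (iff_of_true hμ2 hμ3) h)
    · exact Finset.mem_subtype.mpr hα2
    · exact fun h => hβ2 (Finset.mem_subtype.mp h)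
    · exact Finset.mem_subtype.mpr hα3
    · exact fun h => hβ3 (Finset.mem_subtype.mp h)
  · by_cases hμ2 : μ ∈ C2
    · have hμ3 : μ ∈ C3 := hs23.subset hμ2
      obtain ⟨z, hz1, hzα⟩ := Finset.exists_mem_ne
        (lt_of_lt_of_le one_lt_two (t.two_le C1 hC1)) α
      have hzμ : z ≠ μ := fun h => hμ1 (h ▸ hz1)
      refine ⟨_, mem_del_splits t μ hC2 ?_ ?_, _, mem_del_splits t μ hC3 ?_ ?_, ?_, ?_, ?_, ?_, ?_⟩
      · exact two_le_erase hα2 (hs12.subset hz1) h1 hzμ hzα.symm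
      · refine le_trans (t.two_le_compl C3 hC3) (Finset.card_le_card ?_)
        intro y hy
        exact Finset.mem_erase.mpr ⟨fun h => Finset.mem_compl.mp hy (h ▸ hμ3),
          compl_sub hs23.subset hy⟩
      · exact two_le_erase hα3 (hs23.subset (hs12.subset hz1)) h1 hzμ hzα.symm
      · rw [Finset.erase_eq_of_notMem (by simp [hμ3])]
        exact t.two_le_compl C3 hC3
      · exact fun h => hs23.ne (fsubtype_inj (iff_of_true hμ2 hμ3) h)
      · exact Finset.mem_subtype.mpr hα2
      · exact fun h => hβ2 (Finset.mem_subtype.mp h)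
      · exact Finset.mem_subtype.mpr hα3
      · exact fun h => hβ3 (Finset.mem_subtype.mp h)
    · -- μ ∉ C1, μ ∉ C2 : use the pair (C1, C2)
      obtain ⟨w, hw2, hw1⟩ := Finset.exists_of_ssubset hs12
      refine ⟨_, mem_del_splits t μ hC1 ?_ ?_, _, mem_del_splits t μ hC2 ?_ ?_, ?_, ?_, ?_, ?_, ?_⟩
      · rw [Finset.erase_eq_of_notMem hμ1]
        exact t.two_le C1 hC1
      · refine two_le_erase (Finset.mem_compl.mpr hβ1) (Finset.mem_compl.mpr hw1) h2
          (fun h => hμ2 (h ▸ hw2)) (fun h => hβ2 (h ▸ hw2))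
      · rw [Finset.erase_eq_of_notMem hμ2]
        exact t.two_le C2 hC2
      · by_cases hμ3 : μ ∈ C3
        · refine le_trans (t.two_le_compl C3 hC3) (Finset.card_le_card ?_)
          intro y hy
          exact Finset.mem_erase.mpr ⟨fun h => Finset.mem_compl.mp hy (h ▸ hμ3),
            compl_sub hs23.subset hy⟩
        · obtain ⟨w', hw3, hw2'⟩ := Finset.exists_of_ssubset hs23
          refine two_le_erase (Finset.mem_compl.mpr hβ2) (Finset.mem_compl.mpr hw2') h2
            (fun h => hμ3 (h ▸ hw3)) (fun h => hβ3 (h ▸ hw3))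
      · exact fun h => hs12.ne (fsubtype_inj (iff_of_false hμ1 hμ2) h)
      · exact Finset.mem_subtype.mpr hα1
      · exact fun h => hβ1 (Finset.mem_subtype.mp h)
      · exact Finset.mem_subtype.mpr hα2
      · exact fun h => hβ2 (Finset.mem_subtype.mp h)

end Aux

/-- Let `t` be a tree with at least 7 leaves containing two
leaves `α`, `β` whose attachment vertices are separated by at least 4 internal
vertices along the path between them — equivalently, at least 3 internal edges
(splits) of `t` separate `α` from `β`.  Then for every label `μ ≠ α, β` the
leaves `α` and `β` are non-adjacent in `∂_μ t`. -/
theorem nonadjacent_after_deletion_of_far_leaves {A : Type*} [Fintype A] [DecidableEq A]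
    (hcard : 7 ≤ Fintype.card A) (t : LTree A) (α β : A) (hαβ : α ≠ β)
    (hsep : 3 ≤ (t.splits.filter (fun C => α ∈ C ∧ β ∉ C)).card) :
    ∀ (μ : A) (h1 : α ≠ μ) (h2 : β ≠ μ),
      ¬ (t.del μ).Adjacent ⟨α, h1⟩ ⟨β, h2⟩ := by
  intro μ h1 h2 hadj
  classical
  have h3 : 2 < (t.splits.filter (fun C => α ∈ C ∧ β ∉ C)).card := by omega
  obtain ⟨C1, hC1, C2, hC2, C3, hC3, h12, h13, h23⟩ := Finset.two_lt_card.mp h3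
  rw [Finset.mem_filter] at hC1 hC2 hC3
  obtain ⟨hC1s, hα1, hβ1⟩ := hC1
  obtain ⟨hC2s, hα2, hβ2⟩ := hC2
  obtain ⟨hC3s, hα3, hβ3⟩ := hC3
  have comp12 := comparable_of_sep t hC1s hC2s hα1 hα2 hβ1 hβ2
  have comp13 := comparable_of_sep t hC1s hC3s hα1 hα3 hβ1 hβ3
  have comp23 := comparable_of_sep t hC2s hC3s hα2 hα3 hβ2 hβ3
  have main : ∃ D ∈ (t.del μ).splits, ∃ D' ∈ (t.del μ).splits, D ≠ D' ∧
      (⟨α, h1⟩ : {a : A // a ≠ μ}) ∈ D ∧ (⟨β, h2⟩ : {a : A // a ≠ μ}) ∉ D ∧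
      (⟨α, h1⟩ : {a : A // a ≠ μ}) ∈ D' ∧ (⟨β, h2⟩ : {a : A // a ≠ μ}) ∉ D' := by
    rcases comp12 with s12 | s21
    · rcases comp23 with s23 | s32
      · exact key t h1 h2 hC1s hC2s hC3s hα1 hβ1 hα2 hβ2 hα3 hβ3
          (s12.ssubset_of_ne h12) (s23.ssubset_of_ne h23)
      · rcases comp13 with s13 | s31
        · exact key t h1 h2 hC1s hC3s hC2s hα1 hβ1 hα3 hβ3 hα2 hβ2
            (s13.ssubset_of_ne h13) (s32.ssubset_of_ne h23.symm)
        · exact key t h1 h2 hC3s hC1s hC2s hα3 hβ3 hα1 hβ1 hα2 hβ2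
            (s31.ssubset_of_ne h13.symm) (s12.ssubset_of_ne h12)
    · rcases comp13 with s13 | s31
      · exact key t h1 h2 hC2s hC1s hC3s hα2 hβ2 hα1 hβ1 hα3 hβ3
          (s21.ssubset_of_ne h12.symm) (s13.ssubset_of_ne h13)
      · rcases comp23 with s23 | s32
        · exact key t h1 h2 hC2s hC3s hC1s hα2 hβ2 hα3 hβ3 hα1 hβ1
            (s23.ssubset_of_ne h23) (s31.ssubset_of_ne h13.symm)
        · exact key t h1 h2 hC3s hC2s hC1s hα3 hβ3 hα2 hβ2 hα1 hβ1
            (s32.ssubset_of_ne h23.symm) (s21.ssubset_of_ne h12.symm)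
  obtain ⟨D, hD, D', hD', hDD', hαD, hβD, hαD', hβD'⟩ := main
  rcases hadj with h | ⟨D0, hD0, hα0, hβ0, hb1, hb2⟩
  · exact hβD ((h D hD).mp hαD)
  · by_cases hD_eq : D = D0
    · exact no_adj_pair (t.del μ) hD0 hD' (hD_eq ▸ hDD') hα0 hβ0 hαD' hβD' hb1 hb2
    · exact no_adj_pair (t.del μ) hD0 hD (Ne.symm hD_eq) hα0 hβ0 hαD hβD hb1 hb2
end

section
/- Let A be a finite set with |A| ≥ 6 and let (x_μ)_{μ∈A} be a compatible family of trees (∂_α x_β = ∂_β x_α for all distinct α, β) such that each x_μ has at most two internal vertices and at least one x_μ has exactly two internal vertices. Then there is a well-defined partition of A into two subsets such that the tree y with two internal vertices corresponding to this partition satisfies ∂_μ y = x_μ for all μ ∈ A. -/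
set_option linter.unusedSectionVars false

/-- The elements of `A` different from both `α` and `β`, obtained by two
successive subtype constructions, identified with the evident subtype. -/
def delTwoEquiv {A : Type*} [DecidableEq A] (α β : A) (h : β ≠ α) :
    {y : {a : A // a ≠ α} // y ≠ (⟨β, h⟩ : {a : A // a ≠ α})} ≃ {a : A // a ≠ α ∧ a ≠ β} where
  toFun y := ⟨y.1.1, y.1.2, fun hb => y.2 (Subtype.ext hb)⟩
  invFun a := ⟨⟨a.1, a.2.1⟩, fun he => a.2.2 (congrArg Subtype.val he)⟩
  left_inv := fun _ => rfl
  right_inv := fun _ => rfl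


section Helpers

variable {A : Type*} [Fintype A] [DecidableEq A]

lemma eq_of_erase_eq {s t : Finset A} {a : A} (h : a ∈ s ↔ a ∈ t)
    (he : s.erase a = t.erase a) : s = t := by
  ext b
  by_cases hb : b = a
  · subst hb; exact h
  · constructor
    · intro hbs
      have : b ∈ s.erase a := Finset.mem_erase.mpr ⟨hb, hbs⟩
      rw [he] at this; exact (Finset.mem_erase.mp this).2
    · intro hbt
      have : b ∈ t.erase a := Finset.mem_erase.mpr ⟨hb, hbt⟩
      rw [← he] at this; exact (Finset.mem_erase.mp this).2

lemma compl_erase_erase (s : Finset A) (a : A) :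
    (s.erase a)ᶜ.erase a = sᶜ.erase a := by
  ext b
  simp only [Finset.mem_erase, Finset.mem_compl]
  tauto

lemma compl_erase_congr {s t : Finset A} {a : A} (h : s.erase a = t.erase a) :
    sᶜ.erase a = tᶜ.erase a := by
  rw [← compl_erase_erase s a, h, compl_erase_erase]

lemma oc_oc {s : Finset A} {a : A} (h : a ∉ s) :
    (sᶜ.erase a)ᶜ.erase a = s := by
  rw [compl_erase_erase, compl_compl, Finset.erase_eq_of_notMem h]

lemma card_erase_compl (s : Finset A) (a : A) :
    (s.erase a).card + (sᶜ.erase a).card + 1 = Fintype.card A := by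
  have hd : Disjoint (s.erase a) (sᶜ.erase a) := by
    rw [Finset.disjoint_left]
    intro b hb hb'
    exact (Finset.mem_compl.mp (Finset.mem_of_mem_erase hb')) (Finset.mem_of_mem_erase hb)
  have hu : (s.erase a) ∪ (sᶜ.erase a) = Finset.univ.erase a := by
    ext b
    simp only [Finset.mem_union, Finset.mem_erase, Finset.mem_compl, Finset.mem_univ, and_true]
    tauto
  have := Finset.card_union_of_disjoint hd
  rw [hu, Finset.card_erase_of_mem (Finset.mem_univ a), Finset.card_univ] at this
  have hpos : 1 ≤ Fintype.card A := Fintype.card_pos_iff.mpr ⟨a⟩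
  omega

lemma card_erase_erase_compl (s : Finset A) {a b : A} (hab : a ≠ b) :
    ((s.erase a).erase b).card + ((sᶜ.erase a).erase b).card + 2 = Fintype.card A := by
  have hd : Disjoint ((s.erase a).erase b) ((sᶜ.erase a).erase b) := by
    rw [Finset.disjoint_left]
    intro c hc hc'
    exact (Finset.mem_compl.mp (Finset.mem_of_mem_erase (Finset.mem_of_mem_erase hc')))
      (Finset.mem_of_mem_erase (Finset.mem_of_mem_erase hc))
  have hu : ((s.erase a).erase b) ∪ ((sᶜ.erase a).erase b) = (Finset.univ.erase a).erase b := by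
    ext c
    simp only [Finset.mem_union, Finset.mem_erase, Finset.mem_compl, Finset.mem_univ, and_true]
    tauto
  have := Finset.card_union_of_disjoint hd
  rw [hu, Finset.card_erase_of_mem (by simp [Finset.mem_erase, hab.symm]),
    Finset.card_erase_of_mem (Finset.mem_univ a), Finset.card_univ] at this
  have hpos : 2 ≤ Fintype.card A := Fintype.one_lt_card_iff_nontrivial.mpr ⟨⟨a, b, hab⟩⟩
  omega

lemma image_val_subtype (p : A → Prop) [DecidablePred p] (S : Finset A) :
    (S.subtype p).image Subtype.val = S.filter p := by
  ext a
  simp only [Finset.mem_image, Finset.mem_filter]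
  constructor
  · rintro ⟨y, hy, rfl⟩
    exact ⟨(Finset.mem_subtype.mp hy), y.2⟩
  · rintro ⟨ha, hp⟩
    exact ⟨⟨a, hp⟩, Finset.mem_subtype.mpr ha, rfl⟩

lemma card_ne_subtype (μ : A) : Fintype.card {a : A // a ≠ μ} = Fintype.card A - 1 := by
  have : Fintype.card {a : A // ¬ (a = μ)} = Fintype.card A - 1 := by
    rw [Fintype.card_subtype_compl, Fintype.card_subtype_eq]
  exact this

lemma card_double {β α : A} (h : α ≠ β) :
    Fintype.card {y : {a : A // a ≠ β} // y ≠ (⟨α, h⟩ : {a : A // a ≠ β})} =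
      Fintype.card A - 2 := by
  rw [Fintype.card_congr (delTwoEquiv β α h), Fintype.card_subtype]
  have he : Finset.filter (fun a : A => a ≠ β ∧ a ≠ α) Finset.univ
      = (Finset.univ.erase β).erase α := by
    ext a
    simp only [Finset.mem_filter, Finset.mem_erase, Finset.mem_univ, and_true, true_and]
    tauto
  rw [he, Finset.card_erase_of_mem (by simp [Finset.mem_erase, h]),
    Finset.card_erase_of_mem (Finset.mem_univ β), Finset.card_univ]
  omega

end Helpers

section Emb

variable {A : Type*} [Fintype A] [DecidableEq A]

/-- splits embedded into ambient finsets -/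
def LTree.emb {μ : A} (t : LTree {a : A // a ≠ μ}) : Finset (Finset A) :=
  t.splits.image (Finset.image Subtype.val)

open LTree

lemma emb_injective {μ : A} {t t' : LTree {a : A // a ≠ μ}} (h : emb t = emb t') : t = t' :=
  LTree.ext' (Finset.image_injective (Finset.image_injective Subtype.val_injective) h)

lemma card_emb {μ : A} (t : LTree {a : A // a ≠ μ}) : (emb t).card = t.splits.card :=
  Finset.card_image_of_injective _ (Finset.image_injective Subtype.val_injective)

lemma val_image_compl {μ : A} (C : Finset {a : A // a ≠ μ}) :
    Cᶜ.image Subtype.val = (C.image Subtype.val)ᶜ.erase μ := by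
  ext a
  simp only [Finset.mem_image, Finset.mem_compl, Finset.mem_erase]
  constructor
  · rintro ⟨y, hy, rfl⟩
    refine ⟨y.2, ?_⟩
    rintro ⟨z, hz, hza⟩
    exact hy (by rwa [Subtype.ext hza] at hz)
  · rintro ⟨ha, h2⟩
    exact ⟨⟨a, ha⟩, fun hc => h2 ⟨⟨a, ha⟩, hc, rfl⟩, rfl⟩

lemma mem_emb {μ : A} {t : LTree {a : A // a ≠ μ}} {S : Finset A} (hS : S ∈ emb t) :
    μ ∉ S ∧ 2 ≤ S.card ∧ 2 ≤ (Sᶜ.erase μ).card ∧ Sᶜ.erase μ ∈ emb t := by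
  obtain ⟨C, hC, rfl⟩ := Finset.mem_image.mp hS
  refine ⟨?_, ?_, ?_, ?_⟩
  · rintro hμ
    obtain ⟨y, -, hy⟩ := Finset.mem_image.mp hμ
    exact y.2 hy
  · rw [Finset.card_image_of_injective _ Subtype.val_injective]
    exact t.two_le C hC
  · rw [← val_image_compl, Finset.card_image_of_injective _ Subtype.val_injective]
    exact t.two_le_compl C hC
  · rw [← val_image_compl]
    exact Finset.mem_image_of_mem _ (t.compl_mem C hC)

lemma ne_oc {μ : A} {S : Finset A} (h : 1 ≤ S.card) : S ≠ Sᶜ.erase μ := by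
  obtain ⟨a, ha⟩ := Finset.card_pos.mp h
  intro he
  have : a ∈ Sᶜ.erase μ := he ▸ ha
  exact (Finset.mem_compl.mp (Finset.mem_of_mem_erase this)) ha

lemma erase_compl_ne {s : Finset A} {a : A} (h : 1 ≤ (s.erase a).card) :
    s.erase a ≠ sᶜ.erase a := by
  obtain ⟨b, hb⟩ := Finset.card_pos.mp h
  intro he
  have hb' : b ∈ sᶜ.erase a := he ▸ hb
  exact (Finset.mem_compl.mp (Finset.mem_of_mem_erase hb')) (Finset.mem_of_mem_erase hb)

lemma emb_pair {μ : A} {t : LTree {a : A // a ≠ μ}} (hle : t.splits.card ≤ 2)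
    {S : Finset A} (hS : S ∈ emb t) : emb t = {S, Sᶜ.erase μ} := by
  obtain ⟨-, h2, -, hoc⟩ := mem_emb hS
  have hne : S ≠ Sᶜ.erase μ := ne_oc (by omega)
  refine (Finset.eq_of_subset_of_card_le ?_ ?_).symm
  · intro D hD
    rcases Finset.mem_insert.mp hD with rfl | hD
    · exact hS
    · rwa [Finset.mem_singleton.mp hD]
  · rw [Finset.card_pair hne, card_emb]
    exact hle

lemma emb_del (y : LTree A) (μ : A) :
    emb (y.del μ) =
      (y.splits.image (fun S => S.erase μ)).filter
        (fun D => 2 ≤ D.card ∧ D.card + 3 ≤ Fintype.card A) := by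
  have hpos : 1 ≤ Fintype.card A := Fintype.card_pos_iff.mpr ⟨μ⟩
  have key : ∀ S : Finset A, (S.subtype (· ≠ μ)).image Subtype.val = S.erase μ := by
    intro S
    rw [image_val_subtype, Finset.filter_ne']
  have ckey : ∀ S : Finset A, (S.subtype (· ≠ μ)).card = (S.erase μ).card := by
    intro S
    rw [← key S]
    exact (Finset.card_image_of_injective _ Subtype.val_injective).symm
  ext D
  simp only [emb, LTree.del, Finset.mem_image, Finset.mem_filter]
  constructor
  · rintro ⟨C, ⟨⟨S, hS, rfl⟩, hcond1, hcond2⟩, rfl⟩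
    rw [Finset.card_compl, card_ne_subtype, ckey] at hcond2
    rw [ckey] at hcond1
    rw [key]
    exact ⟨⟨S, hS, rfl⟩, hcond1, by omega⟩
  · rintro ⟨⟨S, hS, rfl⟩, h1, h2⟩
    refine ⟨S.subtype (· ≠ μ), ⟨⟨S, hS, rfl⟩, ?_, ?_⟩, key S⟩
    · rw [ckey]; exact h1
    · rw [Finset.card_compl, card_ne_subtype, ckey]; omega

lemma emb_del2 {β : A} (t : LTree {a : A // a ≠ β}) {α : A} (h : α ≠ β) :
    ((t.del ⟨α, h⟩).relabel (delTwoEquiv β α h)).splits.image (Finset.image Subtype.val) =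
      ((emb t).image (fun S => S.erase α)).filter
        (fun D => 2 ≤ D.card ∧ D.card + 4 ≤ Fintype.card A) := by
  have hpos : 2 ≤ Fintype.card A :=
    Fintype.one_lt_card_iff_nontrivial.mpr ⟨⟨α, β, h⟩⟩
  have hstep : ((t.del ⟨α, h⟩).relabel (delTwoEquiv β α h)).splits.image
      (Finset.image Subtype.val) =
      (t.del ⟨α, h⟩).splits.image (Finset.image (fun y => (y.1.1 : A))) := by
    show ((t.del ⟨α, h⟩).splits.image _).image _ = _
    rw [Finset.image_image]
    congr 1
    funext C
    show (C.image _).image _ = _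
    rw [Finset.image_image]
    rfl
  rw [hstep]
  have key : ∀ S : Finset {a : A // a ≠ β},
      (S.subtype (· ≠ (⟨α, h⟩ : {a : A // a ≠ β}))).image (fun y => (y.1.1 : A)) =
        (S.image Subtype.val).erase α := by
    intro S
    ext a
    simp only [Finset.mem_image, Finset.mem_erase]
    constructor
    · rintro ⟨z, hz, rfl⟩
      have hz1 : z.1 ∈ S := Finset.mem_subtype.mp hz
      exact ⟨fun he => z.2 (Subtype.ext he), ⟨z.1, hz1, rfl⟩⟩
    · rintro ⟨hne, y, hy, rfl⟩
      exact ⟨⟨y, fun he => hne (congrArg Subtype.val he)⟩,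
        Finset.mem_subtype.mpr hy, rfl⟩
  have vvinj : Function.Injective (fun y : {y : {a : A // a ≠ β} // y ≠ ⟨α, h⟩} => (y.1.1 : A)) := by
    intro a b hab
    exact Subtype.ext (Subtype.ext hab)
  have ckey : ∀ S : Finset {a : A // a ≠ β},
      (S.subtype (· ≠ (⟨α, h⟩ : {a : A // a ≠ β}))).card = ((S.image Subtype.val).erase α).card := by
    intro S
    rw [← key S]
    exact (Finset.card_image_of_injective _ vvinj).symm
  ext D
  simp only [LTree.del, emb, Finset.mem_image, Finset.mem_filter]
  constructor
  · rintro ⟨C, ⟨⟨S, hS, rfl⟩, hcond1, hcond2⟩, rfl⟩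
    rw [Finset.card_compl, card_double h, ckey] at hcond2
    rw [ckey] at hcond1
    rw [key]
    exact ⟨⟨S.image Subtype.val, ⟨S, hS, rfl⟩, rfl⟩, hcond1, by omega⟩
  · rintro ⟨⟨D', ⟨S, hS, rfl⟩, rfl⟩, h1, h2⟩
    refine ⟨S.subtype (· ≠ (⟨α, h⟩ : {a : A // a ≠ β})),
      ⟨⟨S, hS, rfl⟩, ?_, ?_⟩, key S⟩
    · rw [ckey]; exact h1
    · rw [Finset.card_compl, card_double h, ckey]; omega

lemma emb_relabel_right {p q : A → Prop} [DecidablePred p] [DecidablePred q]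
    (hpq : ∀ a, p a ↔ q a) (t : LTree {a : A // p a}) :
    ((t.relabel (Equiv.subtypeEquivRight hpq)).splits).image (Finset.image Subtype.val) =
      t.splits.image (Finset.image Subtype.val) := by
  show (t.splits.image _).image _ = _
  rw [Finset.image_image]
  congr 1
  funext C
  show (C.image _).image _ = _
  rw [Finset.image_image]
  congr 1

/-- double restriction -/
def ddr (T : Finset (Finset A)) (γ : A) : Finset (Finset A) :=
  (T.image (fun S => S.erase γ)).filter (fun D => 2 ≤ D.card ∧ D.card + 4 ≤ Fintype.card A)

lemma mem_ddr {T : Finset (Finset A)} {γ : A} {D : Finset A} :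
    D ∈ ddr T γ ↔ (∃ S ∈ T, S.erase γ = D) ∧ 2 ≤ D.card ∧ D.card + 4 ≤ Fintype.card A := by
  simp only [ddr, Finset.mem_filter, Finset.mem_image]

lemma ddr_pair (s t : Finset A) (γ : A) :
    ddr {s, t} γ = ({s.erase γ, t.erase γ} : Finset (Finset A)).filter
      (fun D => 2 ≤ D.card ∧ D.card + 4 ≤ Fintype.card A) := by
  simp only [ddr, Finset.image_insert, Finset.image_singleton]

lemma filter_pair_full {m : ℕ} {s t : Finset A}
    (hsum : s.card + t.card + m = Fintype.card A + 2)
    (hs : 2 ≤ s.card) (ht : 2 ≤ t.card) :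
    ({s, t} : Finset (Finset A)).filter
      (fun D => 2 ≤ D.card ∧ D.card + m ≤ Fintype.card A) = {s, t} := by
  apply Finset.filter_true_of_mem
  intro D hD
  rcases Finset.mem_insert.mp hD with rfl | hD
  · exact ⟨hs, by omega⟩
  · rw [Finset.mem_singleton.mp hD]
    exact ⟨ht, by omega⟩

lemma filter_pair_empty {m : ℕ} {s t : Finset A}
    (hsum : s.card + t.card + m = Fintype.card A + 2)
    (hdeg : s.card ≤ 1 ∨ t.card ≤ 1) :
    ({s, t} : Finset (Finset A)).filter
      (fun D => 2 ≤ D.card ∧ D.card + m ≤ Fintype.card A) = ∅ := by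
  rw [Finset.filter_eq_empty_iff]
  intro D hD
  rcases Finset.mem_insert.mp hD with rfl | hD
  · rintro ⟨h1, h2⟩; omega
  · rw [Finset.mem_singleton.mp hD]
    rintro ⟨h1, h2⟩; omega

lemma pair_eq_of_filter_eq {cond : Finset A → Prop} [DecidablePred cond]
    {s t s' t' : Finset A}
    (h : ({s, t} : Finset (Finset A)).filter cond = ({s', t'} : Finset (Finset A)).filter cond)
    (hs : cond s) (ht : cond t) (hst : s ≠ t) :
    ({s, t} : Finset (Finset A)) = {s', t'} := by
  have h1 : ({s, t} : Finset (Finset A)).filter cond = {s, t} := by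
    apply Finset.filter_true_of_mem
    intro D hD
    rcases Finset.mem_insert.mp hD with rfl | hD
    · exact hs
    · rwa [Finset.mem_singleton.mp hD]
  rw [h1] at h
  apply Finset.eq_of_subset_of_card_le
  · rw [h]; exact Finset.filter_subset _ _
  · rw [Finset.card_pair hst]
    exact le_trans (Finset.card_insert_le _ _) (by simp)

/-- the two-internal-vertex tree attached to a bipartition -/
def pairTree (P : Finset A) (h1 : 2 ≤ P.card) (h2 : 2 ≤ Pᶜ.card) : LTree A where
  splits := {P, Pᶜ}
  compl_mem := by
    intro B hB
    rcases Finset.mem_insert.mp hB with rfl | hB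
    · exact Finset.mem_insert_of_mem (Finset.mem_singleton_self _)
    · rw [Finset.mem_singleton.mp hB, compl_compl]
      exact Finset.mem_insert_self _ _
  two_le := by
    intro B hB
    rcases Finset.mem_insert.mp hB with rfl | hB
    · exact h1
    · rw [Finset.mem_singleton.mp hB]; exact h2
  two_le_compl := by
    intro B hB
    rcases Finset.mem_insert.mp hB with rfl | hB
    · exact h2
    · rw [Finset.mem_singleton.mp hB, compl_compl]; exact h1
  compat := by
    intro B hB C hC
    rcases Finset.mem_insert.mp hB with rfl | hB <;>
      [skip; rw [Finset.mem_singleton.mp hB]] <;>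
    (rcases Finset.mem_insert.mp hC with rfl | hC <;>
      [skip; rw [Finset.mem_singleton.mp hC]]) <;>
    simp [Finset.inter_compl, Finset.inter_comm]

end Emb

/-- Let `|A| ≥ 6` and let `(x_μ)` be a compatible family of
trees, each with at most two internal vertices (at most one split pair) and at
least one with exactly two internal vertices.  Then there is a well-defined
partition `{P, Pᶜ}` of `A` into two parts such that the tree `y` with two
internal vertices corresponding to this partition satisfies `∂_μ y = x_μ`
for all `μ`. -/
theorem unique_filler_two_internal_vertices {A : Type*} [Fintype A] [DecidableEq A]
    (hcard : 6 ≤ Fintype.card A)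
    (x : ∀ μ : A, LTree {a : A // a ≠ μ})
    -- the simplicial compatibility `∂_α x_β = ∂_β x_α` for all distinct `α, β`,
    -- stated after identifying the label sets of the two sides with
    -- `{a : A // a ≠ β ∧ a ≠ α}` via the evident relabellings
    (hcompat : ∀ (α β : A) (h : α ≠ β),
      ((x β).del ⟨α, h⟩).relabel (delTwoEquiv β α h) =
        ((((x α).del ⟨β, h.symm⟩).relabel (delTwoEquiv α β h.symm)).relabel
          (Equiv.subtypeEquivRight (fun a => and_comm))))
    (hle : ∀ μ : A, (x μ).splits.card ≤ 2)
    (hex : ∃ μ : A, (x μ).splits.card = 2) :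
    ∃! y : LTree A, (∃ P : Finset A, y.splits = {P, Pᶜ}) ∧ ∀ μ : A, y.del μ = x μ := by
  classical
  have hK : ∀ (a b : A) (h : a ≠ b), ddr (LTree.emb (x b)) a = ddr (LTree.emb (x a)) b := by
    intro a b h
    have hc := congrArg
      (fun t : LTree {c : A // c ≠ b ∧ c ≠ a} => t.splits.image (Finset.image Subtype.val))
      (hcompat a b h)
    rw [emb_del2 (x b) h, emb_relabel_right, emb_del2 (x a) h.symm] at hc
    exact hc
  have hstruct : ∀ μ : A, ∀ S ∈ LTree.emb (x μ), LTree.emb (x μ) = {S, Sᶜ.erase μ} :=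
    fun μ S hS => emb_pair (hle μ) hS
  -- choose the tree with two internal vertices and its larger side Q
  obtain ⟨μ₀, hμ₀⟩ := hex
  have hWne : (LTree.emb (x μ₀)).Nonempty := by
    rw [← Finset.card_pos, card_emb, hμ₀]; omega
  obtain ⟨W, hWm⟩ := hWne
  obtain ⟨hWμ, hW2, hW2', hWc⟩ := mem_emb hWm
  have hsumW : W.card + (Wᶜ.erase μ₀).card + 1 = Fintype.card A := by
    have h := card_erase_compl W μ₀
    rwa [Finset.erase_eq_of_notMem hWμ] at h
  obtain ⟨Q, hQmem, hQ3⟩ : ∃ Q ∈ LTree.emb (x μ₀), 3 ≤ Q.card := by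
    by_cases h3 : 3 ≤ W.card
    · exact ⟨W, hWm, h3⟩
    · exact ⟨Wᶜ.erase μ₀, hWc, by omega⟩
  obtain ⟨hQμ, hQ2, hR2, hRmem⟩ := mem_emb hQmem
  have hembQ : LTree.emb (x μ₀) = {Q, Qᶜ.erase μ₀} := hstruct μ₀ Q hQmem
  have hsumQ : Q.card + (Qᶜ.erase μ₀).card + 1 = Fintype.card A := by
    have h := card_erase_compl Q μ₀
    rwa [Finset.erase_eq_of_notMem hQμ] at h
  -- pick α ∈ Q
  obtain ⟨α, hαQ⟩ : Q.Nonempty := Finset.card_pos.mp (by omega)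
  have hαμ₀ : α ≠ μ₀ := fun he => hQμ (he ▸ hαQ)
  have hddμ₀α : ddr (LTree.emb (x μ₀)) α = {Q.erase α, Qᶜ.erase μ₀} := by
    rw [hembQ, ddr_pair]
    rw [Finset.erase_eq_of_notMem
      (show α ∉ Qᶜ.erase μ₀ from
        fun hc => (Finset.mem_compl.mp (Finset.mem_of_mem_erase hc)) hαQ)]
    exact filter_pair_full
      (by rw [Finset.card_erase_of_mem hαQ]; omega)
      (by rw [Finset.card_erase_of_mem hαQ]; omega) hR2
  have hmem1 : Q.erase α ∈ ddr (LTree.emb (x α)) μ₀ := by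
    rw [hK μ₀ α hαμ₀.symm, hddμ₀α]
    exact Finset.mem_insert_self _ _
  obtain ⟨⟨S, hSmem, hSQ⟩, hQα2, hQα4⟩ := mem_ddr.mp hmem1
  obtain ⟨hαS, hS2, hS2', hSc⟩ := mem_emb hSmem
  have hembS : LTree.emb (x α) = {S, Sᶜ.erase α} := hstruct α S hSmem
  -- define the bipartition P
  set P : Finset A := if μ₀ ∈ S then insert μ₀ Q else Q with hPdef
  have hPμ₀ : P.erase μ₀ = Q := by
    by_cases hμS : μ₀ ∈ S
    · rw [hPdef, if_pos hμS]; exact Finset.erase_insert hQμ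
    · rw [hPdef, if_neg hμS]; exact Finset.erase_eq_of_notMem hQμ
  have hPiff : μ₀ ∈ P ↔ μ₀ ∈ S := by
    by_cases hμS : μ₀ ∈ S
    · rw [hPdef, if_pos hμS]; simp [hμS]
    · rw [hPdef, if_neg hμS]; simp [hQμ, hμS]
  have hQP : Q ⊆ P := by
    rw [hPdef]; split
    · exact Finset.subset_insert _ _
    · exact Finset.Subset.refl _
  have hαP : α ∈ P := hQP hαQ
  have hPα : P.erase α = S := by
    apply eq_of_erase_eq (a := μ₀)
    · constructor
      · intro h
        exact hPiff.mp (Finset.mem_of_mem_erase h)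
      · intro h
        exact Finset.mem_erase.mpr ⟨hαμ₀.symm, hPiff.mpr h⟩
    · rw [Finset.erase_right_comm, hPμ₀, hSQ]
  have hPcμ₀ : Pᶜ.erase μ₀ = Qᶜ.erase μ₀ :=
    compl_erase_congr (by rw [hPμ₀, Finset.erase_eq_of_notMem hQμ])
  have hPcα : Pᶜ.erase α = Sᶜ.erase α :=
    compl_erase_congr (by rw [hPα, Finset.erase_eq_of_notMem hαS])
  have hembμ₀P : LTree.emb (x μ₀) = {P.erase μ₀, Pᶜ.erase μ₀} := by
    rw [hembQ, ← hPcμ₀, ← hPμ₀]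
  have hembαP : LTree.emb (x α) = {P.erase α, Pᶜ.erase α} := by
    rw [hembS, ← hPcα, ← hPα]
  have hPμ₀3 : 3 ≤ (P.erase μ₀).card := by rw [hPμ₀]; exact hQ3
  have hR2P : 2 ≤ (Pᶜ.erase μ₀).card := by rw [hPcμ₀]; exact hR2
  have hP2 : 2 ≤ P.card := by
    have h := Finset.card_le_card hQP; omega
  have hPc2 : 2 ≤ Pᶜ.card := by
    have h := Finset.card_le_card (Finset.erase_subset μ₀ Pᶜ); omega
  have hPα2 : 2 ≤ (P.erase α).card := by rw [hPα]; exact hS2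
  have hPcα2 : 2 ≤ (Pᶜ.erase α).card := by rw [hPcα]; exact hS2'
  -- the main verification
  have hG : ∀ β : A, ({P.erase β, Pᶜ.erase β} : Finset (Finset A)).filter
      (fun D => 2 ≤ D.card ∧ D.card + 3 ≤ Fintype.card A) = LTree.emb (x β) := by
    intro β
    by_cases hβμ₀ : β = μ₀
    · subst hβμ₀
      rw [filter_pair_full (by have := card_erase_compl P β; omega) (by omega) hR2P]
      exact hembμ₀P.symm
    by_cases hβα : β = α
    · subst hβα
      rw [filter_pair_full (by have := card_erase_compl P β; omega) hPα2 hPcα2]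
      exact hembαP.symm
    -- β different from μ₀ and α
    have hμ₀β : μ₀ ≠ β := fun he => hβμ₀ he.symm
    have hαβ : α ≠ β := fun he => hβα he.symm
    have hsum1 := card_erase_erase_compl P hμ₀β
    have hsum2 := card_erase_erase_compl P hαβ
    have hsumβ := card_erase_compl P β
    have hddμ₀β : ddr (LTree.emb (x μ₀)) β =
        ({(P.erase μ₀).erase β, (Pᶜ.erase μ₀).erase β} : Finset (Finset A)).filter
          (fun D => 2 ≤ D.card ∧ D.card + 4 ≤ Fintype.card A) := by
      rw [hembμ₀P, ddr_pair]
    have hddαβ : ddr (LTree.emb (x α)) β =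
        ({(P.erase α).erase β, (Pᶜ.erase α).erase β} : Finset (Finset A)).filter
          (fun D => 2 ≤ D.card ∧ D.card + 4 ≤ Fintype.card A) := by
      rw [hembαP, ddr_pair]
    have hKμ₀ : ddr (LTree.emb (x β)) μ₀ = ddr (LTree.emb (x μ₀)) β := hK μ₀ β hμ₀β
    have hKα : ddr (LTree.emb (x β)) α = ddr (LTree.emb (x α)) β := hK α β hαβ
    by_cases hA : 2 ≤ ((P.erase μ₀).erase β).card ∧ 2 ≤ ((Pᶜ.erase μ₀).erase β).card
    · -- CASE 1
      have hdd1 : ddr (LTree.emb (x β)) μ₀ =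
          {(P.erase μ₀).erase β, (Pᶜ.erase μ₀).erase β} := by
        rw [hKμ₀, hddμ₀β]; exact filter_pair_full (by omega) hA.1 hA.2
      have hmemU : (P.erase μ₀).erase β ∈ ddr (LTree.emb (x β)) μ₀ := by
        rw [hdd1]; exact Finset.mem_insert_self _ _
      obtain ⟨⟨U, hUmem, hUerase⟩, -, -⟩ := mem_ddr.mp hmemU
      obtain ⟨hβU, hU2, hU2', hUc⟩ := mem_emb hUmem
      have hembU : LTree.emb (x β) = {U, Uᶜ.erase β} := hstruct β U hUmem
      have hiff : μ₀ ∈ U ↔ μ₀ ∈ P := by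
        by_cases hB : 2 ≤ ((P.erase α).erase β).card ∧ 2 ≤ ((Pᶜ.erase α).erase β).card
        · -- subcase 1a
          have hdd2 : ddr (LTree.emb (x β)) α =
              {(P.erase α).erase β, (Pᶜ.erase α).erase β} := by
            rw [hKα, hddαβ]; exact filter_pair_full (by omega) hB.1 hB.2
          have hmemV : (P.erase α).erase β ∈ ddr (LTree.emb (x β)) α := by
            rw [hdd2]; exact Finset.mem_insert_self _ _
          obtain ⟨⟨V, hVmem, hVerase⟩, -, -⟩ := mem_ddr.mp hmemV
          have hVcase : V = U ∨ V = Uᶜ.erase β := by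
            have h := hembU ▸ hVmem
            simpa using h
          rcases hVcase with rfl | rfl
          · constructor
            · intro h
              have h1 : μ₀ ∈ V.erase α := Finset.mem_erase.mpr ⟨hαμ₀.symm, h⟩
              rw [hVerase] at h1
              exact Finset.mem_of_mem_erase (Finset.mem_of_mem_erase h1)
            · intro h
              have h1 : μ₀ ∈ (P.erase α).erase β :=
                Finset.mem_erase.mpr ⟨hμ₀β, Finset.mem_erase.mpr ⟨hαμ₀.symm, h⟩⟩
              rw [← hVerase] at h1
              exact Finset.mem_of_mem_erase h1
          · exfalso
            obtain ⟨w, hw, hwα⟩ := Finset.exists_mem_ne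
              (show 1 < ((P.erase μ₀).erase β).card by omega) α
            have hwβ : w ≠ β := (Finset.mem_erase.mp hw).1
            have hwP : w ∈ P := Finset.mem_of_mem_erase (Finset.mem_of_mem_erase hw)
            have hwU : w ∈ U := by
              have h1 : w ∈ U.erase μ₀ := by rw [hUerase]; exact hw
              exact Finset.mem_of_mem_erase h1
            have hw2 : w ∈ (P.erase α).erase β :=
              Finset.mem_erase.mpr ⟨hwβ, Finset.mem_erase.mpr ⟨hwα, hwP⟩⟩
            have hw3 : w ∈ (Uᶜ.erase β).erase α := by rw [hVerase]; exact hw2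
            exact (Finset.mem_compl.mp
              (Finset.mem_of_mem_erase (Finset.mem_of_mem_erase hw3))) hwU
        · -- subcase 1b : the α-side double restriction is degenerate
          have hαPc : α ∉ Pᶜ := fun hc => (Finset.mem_compl.mp hc) hαP
          have hq2 : ((P.erase α).erase β).card ≤ 1 := by
            have hdeg : ((P.erase α).erase β).card ≤ 1 ∨ ((Pᶜ.erase α).erase β).card ≤ 1 := by
              omega
            rcases hdeg with h | h
            · exact h
            · exfalso
              have hsub : (Pᶜ.erase μ₀).erase β ⊆ (Pᶜ.erase α).erase β := by
                intro b hb
                rw [Finset.erase_eq_of_notMem hαPc]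
                exact Finset.mem_erase.mpr ⟨(Finset.mem_erase.mp hb).1,
                  Finset.mem_of_mem_erase (Finset.mem_of_mem_erase hb)⟩
              have hcc := Finset.card_le_card hsub
              omega
          by_cases hmP : μ₀ ∈ P
          · exfalso
            have e1 : ((P.erase μ₀).erase β).card = ((P.erase α).erase β).card := by
              by_cases hβP : β ∈ P
              · rw [Finset.card_erase_of_mem (Finset.mem_erase.mpr ⟨hβμ₀, hβP⟩),
                  Finset.card_erase_of_mem hmP,
                  Finset.card_erase_of_mem (Finset.mem_erase.mpr ⟨hβα, hβP⟩),
                  Finset.card_erase_of_mem hαP]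
              · rw [Finset.erase_eq_of_notMem
                    (show β ∉ P.erase μ₀ from fun hc => hβP (Finset.mem_of_mem_erase hc)),
                  Finset.erase_eq_of_notMem
                    (show β ∉ P.erase α from fun hc => hβP (Finset.mem_of_mem_erase hc)),
                  Finset.card_erase_of_mem hmP, Finset.card_erase_of_mem hαP]
            omega
          · -- μ₀ ∉ P
            have hPμ₀e : P.erase μ₀ = P := Finset.erase_eq_of_notMem hmP
            have hαPβ : α ∈ P.erase β := Finset.mem_erase.mpr ⟨hαβ, hαP⟩
            have e2 : ((P.erase α).erase β).card + 1 = (P.erase β).card := by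
              have hpos := Finset.card_pos.mpr ⟨α, hαPβ⟩
              rw [Finset.erase_right_comm, Finset.card_erase_of_mem hαPβ]
              omega
            have e3 : (P.erase β).card = ((P.erase μ₀).erase β).card := by rw [hPμ₀e]
            have hαU : α ∈ U := by
              have h1 : α ∈ (P.erase μ₀).erase β := by rw [hPμ₀e]; exact hαPβ
              rw [← hUerase] at h1
              exact Finset.mem_of_mem_erase h1
            have hUcard2 : (U.erase μ₀).card = 2 := by rw [hUerase]; omega
            have hddempty : ddr (LTree.emb (x β)) α = ∅ := by
              rw [hKα, hddαβ]
              exact filter_pair_empty (by omega) (Or.inl hq2)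
            have hμ₀U : μ₀ ∉ U := by
              intro hmU
              have c1 : U.card = 3 := by
                have hcc := Finset.card_erase_of_mem hmU
                omega
              have c2 : (U.erase α).card = 2 := by
                rw [Finset.card_erase_of_mem hαU]; omega
              have hmemddr : U.erase α ∈ ddr (LTree.emb (x β)) α :=
                mem_ddr.mpr ⟨⟨U, hUmem, rfl⟩, by omega, by omega⟩
              rw [hddempty] at hmemddr
              exact absurd hmemddr (Finset.notMem_empty _)
            simp [hμ₀U, hmP]
      have hUP : U = P.erase β := by
        apply eq_of_erase_eq (a := μ₀)
        · constructor
          · intro h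
            exact Finset.mem_erase.mpr ⟨hμ₀β, hiff.mp h⟩
          · intro h
            exact hiff.mpr (Finset.mem_of_mem_erase h)
        · rw [hUerase, Finset.erase_right_comm]
      have hUcP : Uᶜ.erase β = Pᶜ.erase β := by
        rw [hUP, compl_erase_erase]
      rw [hembU, hUcP, hUP]
      refine filter_pair_full (by omega) ?_ ?_
      · rw [← hUP]; exact hU2
      · rw [← hUcP]; exact hU2'
    · -- CASE 2 : the μ₀-side double restriction is degenerate
      have hdd1e : ddr (LTree.emb (x β)) μ₀ = ∅ := by
        rw [hKμ₀, hddμ₀β]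
        exact filter_pair_empty (by omega) (by omega)
      have hq1 : 2 ≤ ((P.erase μ₀).erase β).card := by
        have h := Finset.pred_card_le_card_erase (s := P.erase μ₀) (a := β)
        omega
      have hq1' : ((Pᶜ.erase μ₀).erase β).card ≤ 1 := by omega
      have hβPcμ : β ∈ Pᶜ.erase μ₀ := by
        by_contra hb
        rw [Finset.erase_eq_of_notMem hb] at hq1'
        omega
      have hβPc : β ∈ Pᶜ := Finset.mem_of_mem_erase hβPcμ
      have hβP : β ∉ P := Finset.mem_compl.mp hβPc
      have hcPcμ : (Pᶜ.erase μ₀).card = 2 := by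
        have hcc := Finset.card_erase_of_mem hβPcμ
        omega
      have hccP := Finset.card_add_card_compl P
      by_cases hmP : μ₀ ∈ P
      · -- |Pᶜ| = 2 : the tree x β must be trivial
        have hμ₀Pc : μ₀ ∉ Pᶜ := fun hc => (Finset.mem_compl.mp hc) hmP
        have hPcμe : Pᶜ.erase μ₀ = Pᶜ := Finset.erase_eq_of_notMem hμ₀Pc
        have hPcc : Pᶜ.card = 2 := by rw [← hPcμe]; exact hcPcμ
        have hl : ({P.erase β, Pᶜ.erase β} : Finset (Finset A)).filter
            (fun D => 2 ≤ D.card ∧ D.card + 3 ≤ Fintype.card A) = ∅ := by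
          refine filter_pair_empty (by omega) (Or.inr ?_)
          rw [Finset.card_erase_of_mem hβPc]; omega
        rw [hl]
        by_contra hne
        obtain ⟨U0, hU0⟩ := Finset.nonempty_iff_ne_empty.mpr (fun h => hne h.symm)
        obtain ⟨hβU0, hU02, hU02', hU0c⟩ := mem_emb hU0
        have hsumU0 : (U0.erase μ₀).card + ((U0ᶜ.erase β).erase μ₀).card + 2
            = Fintype.card A := by
          have h := card_erase_erase_compl U0 (show β ≠ μ₀ from hβμ₀)
          rwa [Finset.erase_eq_of_notMem hβU0] at h
        have hsmall : ∃ W1 ∈ LTree.emb (x β), (W1.erase μ₀).card ≤ 1 := by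
          by_cases hs : (U0.erase μ₀).card ≤ 1
          · exact ⟨U0, hU0, hs⟩
          · refine ⟨U0ᶜ.erase β, hU0c, ?_⟩
            by_contra hs2
            have hmem : U0.erase μ₀ ∈ ddr (LTree.emb (x β)) μ₀ :=
              mem_ddr.mpr ⟨⟨U0, hU0, rfl⟩, by omega, by omega⟩
            rw [hdd1e] at hmem
            exact absurd hmem (Finset.notMem_empty _)
        obtain ⟨W1, hW1m, hW1small⟩ := hsmall
        obtain ⟨hβW1, hW12, hW12', hW1c⟩ := mem_emb hW1m
        have hμ₀W1 : μ₀ ∈ W1 := by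
          by_contra hmw
          rw [Finset.erase_eq_of_notMem hmw] at hW1small
          omega
        have hW1card : W1.card = 2 := by
          have hcc := Finset.card_erase_of_mem hμ₀W1
          omega
        have hddαe : ddr (LTree.emb (x β)) α = ∅ := by
          rw [hKα, hddαβ]
          refine filter_pair_empty (by omega) (Or.inr ?_)
          rw [Finset.erase_eq_of_notMem
              (show α ∉ Pᶜ from fun hc => (Finset.mem_compl.mp hc) hαP),
            Finset.card_erase_of_mem hβPc]
          omega
        have hαW1 : α ∈ W1 := by
          by_contra hαw
          have hmem : W1.erase α ∈ ddr (LTree.emb (x β)) α :=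
            mem_ddr.mpr ⟨⟨W1, hW1m, rfl⟩,
              by rw [Finset.erase_eq_of_notMem hαw]; omega,
              by rw [Finset.erase_eq_of_notMem hαw]; omega⟩
          rw [hddαe] at hmem
          exact absurd hmem (Finset.notMem_empty _)
        have hW1eq : W1 = {μ₀, α} := by
          refine (Finset.eq_of_subset_of_card_le ?_ ?_).symm
          · intro b hb
            rcases Finset.mem_insert.mp hb with rfl | hb
            · exact hμ₀W1
            · rw [Finset.mem_singleton.mp hb]; exact hαW1
          · rw [Finset.card_pair (show μ₀ ≠ α from hαμ₀.symm)]
            omega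
        obtain ⟨γ, hγm⟩ : ((P.erase μ₀).erase α).Nonempty := by
          apply Finset.card_pos.mp
          rw [Finset.card_erase_of_mem (Finset.mem_erase.mpr ⟨hαμ₀, hαP⟩),
            Finset.card_erase_of_mem hmP]
          omega
        have hγα : γ ≠ α := (Finset.mem_erase.mp hγm).1
        have hγμ₀ : γ ≠ μ₀ := (Finset.mem_erase.mp (Finset.mem_of_mem_erase hγm)).1
        have hγP : γ ∈ P := Finset.mem_of_mem_erase (Finset.mem_of_mem_erase hγm)
        have hγβ : γ ≠ β := fun he => hβP (he ▸ hγP)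
        have hγW1 : γ ∉ W1 := by
          rw [hW1eq]
          simp [hγμ₀, hγα]
        have hmemW1 : W1 ∈ ddr (LTree.emb (x β)) γ :=
          mem_ddr.mpr ⟨⟨W1, hW1m, Finset.erase_eq_of_notMem hγW1⟩, by omega, by omega⟩
        rw [hK γ β hγβ] at hmemW1
        obtain ⟨⟨V, hVm, hVe⟩, -, -⟩ := mem_ddr.mp hmemW1
        obtain ⟨hγV, hV2, hV2', hVc⟩ := mem_emb hVm
        have hembV : LTree.emb (x γ) = {V, Vᶜ.erase γ} := hstruct γ V hVm
        have hαV : α ∈ V := by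
          have h1 : α ∈ W1 := by rw [hW1eq]; simp
          rw [← hVe] at h1
          exact Finset.mem_of_mem_erase h1
        have hVsub : ∀ b ∈ V, b = β ∨ b ∈ W1 := by
          intro b hb
          by_cases hbβ : b = β
          · exact Or.inl hbβ
          · right
            rw [← hVe]
            exact Finset.mem_erase.mpr ⟨hbβ, hb⟩
        have hddμ₀γ : ddr (LTree.emb (x μ₀)) γ = {(P.erase μ₀).erase γ, Pᶜ} := by
          rw [hembμ₀P, ddr_pair]
          have h1 : (Pᶜ.erase μ₀).erase γ = Pᶜ := by
            rw [hPcμe, Finset.erase_eq_of_notMem (fun hc => (Finset.mem_compl.mp hc) hγP)]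
          rw [h1]
          refine filter_pair_full ?_ ?_ (by omega)
          · have h := card_erase_erase_compl P (show μ₀ ≠ γ from fun he => hγμ₀ he.symm)
            rw [h1] at h
            omega
          · rw [Finset.card_erase_of_mem (Finset.mem_erase.mpr ⟨hγμ₀, hγP⟩),
              Finset.card_erase_of_mem hmP]
            omega
        have hmemPc : Pᶜ ∈ ddr (LTree.emb (x γ)) μ₀ := by
          rw [hK μ₀ γ (fun he => hγμ₀ he.symm), hddμ₀γ]
          exact Finset.mem_insert_of_mem (Finset.mem_singleton_self _)
        obtain ⟨⟨V', hV'm, hV'e⟩, -, -⟩ := mem_ddr.mp hmemPc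
        have hV'cases : V' = V ∨ V' = Vᶜ.erase γ := by
          have h := hembV ▸ hV'm
          simpa using h
        rcases hV'cases with rfl | rfl
        · have hc : α ∈ Pᶜ := by
            rw [← hV'e]
            exact Finset.mem_erase.mpr ⟨hαμ₀, hαV⟩
          exact absurd hαP (Finset.mem_compl.mp hc)
        · obtain ⟨δ, hδm⟩ : (((P.erase μ₀).erase α).erase γ).Nonempty := by
            apply Finset.card_pos.mp
            rw [Finset.card_erase_of_mem hγm,
              Finset.card_erase_of_mem (Finset.mem_erase.mpr ⟨hαμ₀, hαP⟩),
              Finset.card_erase_of_mem hmP]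
            omega
          have hδγ : δ ≠ γ := (Finset.mem_erase.mp hδm).1
          have hδα : δ ≠ α := (Finset.mem_erase.mp (Finset.mem_of_mem_erase hδm)).1
          have hδμ₀ : δ ≠ μ₀ :=
            (Finset.mem_erase.mp (Finset.mem_of_mem_erase (Finset.mem_of_mem_erase hδm))).1
          have hδP : δ ∈ P :=
            Finset.mem_of_mem_erase (Finset.mem_of_mem_erase (Finset.mem_of_mem_erase hδm))
          have hδβ : δ ≠ β := fun he => hβP (he ▸ hδP)
          have hδV : δ ∉ V := by
            intro hv
            rcases hVsub δ hv with he | hw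
            · exact hδβ he
            · rw [hW1eq] at hw
              rcases Finset.mem_insert.mp hw with he | hw
              · exact hδμ₀ he
              · exact hδα (Finset.mem_singleton.mp hw)
          have hδPc : δ ∈ Pᶜ := by
            rw [← hV'e]
            exact Finset.mem_erase.mpr ⟨hδμ₀, Finset.mem_erase.mpr ⟨hδγ, Finset.mem_compl.mpr hδV⟩⟩
          exact absurd hδP (Finset.mem_compl.mp hδPc)
      · -- μ₀ ∉ P : |Pᶜ| = 3
        have hμ₀Pc : μ₀ ∈ Pᶜ := Finset.mem_compl.mpr hmP
        have hPcc3 : Pᶜ.card = 3 := by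
          have hcc := Finset.card_erase_of_mem hμ₀Pc
          omega
        have hαPc : α ∉ Pᶜ := fun hc => (Finset.mem_compl.mp hc) hαP
        have h1 : (Pᶜ.erase α).erase β = Pᶜ.erase β := by
          rw [Finset.erase_eq_of_notMem hαPc]
        have hβPα : β ∉ P.erase α := fun hc => hβP (Finset.mem_of_mem_erase hc)
        have h2 : (P.erase α).erase β = P.erase α := Finset.erase_eq_of_notMem hβPα
        have hcPcβ : (Pᶜ.erase β).card = 2 := by
          rw [Finset.card_erase_of_mem hβPc]; omega
        have hddαβ' : ddr (LTree.emb (x β)) α = {P.erase α, Pᶜ.erase β} := by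
          rw [hKα, hddαβ, h1, h2]
          refine filter_pair_full ?_ ?_ (by omega)
          · rw [Finset.card_erase_of_mem hαP, hcPcβ]; omega
          · rw [Finset.card_erase_of_mem hαP]; omega
        have hmemU : P.erase α ∈ ddr (LTree.emb (x β)) α := by
          rw [hddαβ']; exact Finset.mem_insert_self _ _
        obtain ⟨⟨U, hUm, hUe⟩, -, -⟩ := mem_ddr.mp hmemU
        obtain ⟨hβU, hU2, hU2', hUc⟩ := mem_emb hUm
        have hembU : LTree.emb (x β) = {U, Uᶜ.erase β} := hstruct β U hUm
        have hUsubP : U ⊆ P := by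
          intro b hb
          by_cases hbα : b = α
          · exact hbα ▸ hαP
          · have hbe : b ∈ U.erase α := Finset.mem_erase.mpr ⟨hbα, hb⟩
            rw [hUe] at hbe
            exact Finset.mem_of_mem_erase hbe
        have hμ₀U : μ₀ ∉ U := fun h => hmP (hUsubP h)
        have hUcard : Fintype.card A - 3 ≤ U.card := by
          by_contra hcon
          have hmem : U.erase μ₀ ∈ ddr (LTree.emb (x β)) μ₀ :=
            mem_ddr.mpr ⟨⟨U, hUm, rfl⟩,
              by rw [Finset.erase_eq_of_notMem hμ₀U]; omega,
              by rw [Finset.erase_eq_of_notMem hμ₀U]; omega⟩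
          rw [hdd1e] at hmem
          exact absurd hmem (Finset.notMem_empty _)
        have hUeq : U = P := Finset.eq_of_subset_of_card_le hUsubP
          (by have hcc := Finset.card_le_card hUsubP; omega)
        rw [hembU, hUeq, Finset.erase_eq_of_notMem hβP]
        refine filter_pair_full ?_ (by omega) ?_
        · rw [hcPcβ]; omega
        · rw [hcPcβ]
  -- existence
  refine ⟨pairTree P hP2 hPc2, ⟨⟨P, rfl⟩, ?_⟩, ?_⟩
  · intro μ
    apply emb_injective
    rw [emb_del]
    show (({P, Pᶜ} : Finset (Finset A)).image _).filter _ = _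
    rw [Finset.image_insert, Finset.image_singleton]
    exact hG μ
  · rintro y' ⟨⟨P', hP'⟩, hdel'⟩
    apply LTree.ext'
    rw [hP']
    show ({P', P'ᶜ} : Finset (Finset A)) = {P, Pᶜ}
    have hP'2 : 2 ≤ P'.card := y'.two_le P' (by rw [hP']; exact Finset.mem_insert_self _ _)
    have hP'c2 : 2 ≤ P'ᶜ.card := y'.two_le_compl P' (by rw [hP']; exact Finset.mem_insert_self _ _)
    have hF : ∀ R : Finset A, R ∈ ({P', P'ᶜ} : Finset (Finset A)) → ∀ μ : A,
        ({R.erase μ, Rᶜ.erase μ} : Finset (Finset A)).filter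
          (fun D => 2 ≤ D.card ∧ D.card + 3 ≤ Fintype.card A) =
        ({P.erase μ, Pᶜ.erase μ} : Finset (Finset A)).filter
          (fun D => 2 ≤ D.card ∧ D.card + 3 ≤ Fintype.card A) := by
      have base : ∀ μ : A,
          ({P'.erase μ, P'ᶜ.erase μ} : Finset (Finset A)).filter
            (fun D => 2 ≤ D.card ∧ D.card + 3 ≤ Fintype.card A) =
          ({P.erase μ, Pᶜ.erase μ} : Finset (Finset A)).filter
            (fun D => 2 ≤ D.card ∧ D.card + 3 ≤ Fintype.card A) := by
        intro μ
        have h1 := congrArg LTree.emb (hdel' μ)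
        rw [emb_del, hP', Finset.image_insert, Finset.image_singleton] at h1
        rw [h1, ← hG μ]
      intro R hR μ
      rcases Finset.mem_insert.mp hR with rfl | hR
      · exact base μ
      · rw [Finset.mem_singleton.mp hR]
        rw [Finset.pair_comm (P'ᶜ.erase μ) (P'ᶜᶜ.erase μ), compl_compl]
        exact base μ
    -- key symmetric impossibility
    have key2 : ∀ R T : Finset A, 2 ≤ R.card → 2 ≤ Rᶜ.card → 2 ≤ T.card → 2 ≤ Tᶜ.card →
        (∀ μ : A, ({R.erase μ, Rᶜ.erase μ} : Finset (Finset A)).filter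
            (fun D => 2 ≤ D.card ∧ D.card + 3 ≤ Fintype.card A) =
          ({T.erase μ, Tᶜ.erase μ} : Finset (Finset A)).filter
            (fun D => 2 ≤ D.card ∧ D.card + 3 ≤ Fintype.card A)) →
        R.erase μ₀ = T.erase μ₀ → μ₀ ∈ R → μ₀ ∉ T → False := by
      intro R T hR2' hRc2' hT2' hTc2' hFa hRT hmR hmT
      have hRT' : R = insert μ₀ T := by
        apply eq_of_erase_eq (a := μ₀) (by simp [hmR])
        rw [hRT, Finset.erase_insert hmT, Finset.erase_eq_of_notMem hmT]
      have hTR : T ⊆ R := by rw [hRT']; exact Finset.subset_insert _ _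
      have hcR : R.card = T.card + 1 := by rw [hRT', Finset.card_insert_of_notMem hmT]
      have hccR := Finset.card_add_card_compl R
      have hccT := Finset.card_add_card_compl T
      have core : ∀ a : A, a ≠ μ₀ → 2 ≤ (R.erase a).card → 2 ≤ (Rᶜ.erase a).card →
          2 ≤ (T.erase a).card → 2 ≤ (Tᶜ.erase a).card → False := by
        intro a haμ₀ h1 h2 h3 h4
        have hsumR := card_erase_compl R a
        have hsumT := card_erase_compl T a
        have hfull : ({R.erase a, Rᶜ.erase a} : Finset (Finset A)) = {T.erase a, Tᶜ.erase a} := by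
          refine pair_eq_of_filter_eq (hFa a) ⟨h1, by omega⟩ ⟨h2, by omega⟩ ?_
          exact erase_compl_ne (by omega)
        have hcase : R.erase a = T.erase a ∨ R.erase a = Tᶜ.erase a := by
          have h := hfull ▸ Finset.mem_insert_self (R.erase a) {Rᶜ.erase a}
          simpa using h
        rcases hcase with hc | hc
        · have hmem : μ₀ ∈ T.erase a := hc ▸ Finset.mem_erase.mpr ⟨haμ₀.symm, hmR⟩
          exact hmT (Finset.mem_of_mem_erase hmem)
        · obtain ⟨w, hw⟩ := Finset.card_pos.mp (show 0 < (T.erase a).card by omega)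
          have hwT : w ∈ T := Finset.mem_of_mem_erase hw
          have hwa : w ≠ a := (Finset.mem_erase.mp hw).1
          have hwR : w ∈ R.erase a := Finset.mem_erase.mpr ⟨hwa, hTR hwT⟩
          rw [hc] at hwR
          exact (Finset.mem_compl.mp (Finset.mem_of_mem_erase hwR)) hwT
      by_cases h3 : 3 ≤ T.card
      · obtain ⟨a, ha⟩ := Finset.card_pos.mp (show 0 < T.card by omega)
        have haR : a ∈ R := hTR ha
        have haμ₀ : a ≠ μ₀ := fun he => hmT (he ▸ ha)
        have haRc : a ∉ Rᶜ := fun hc => (Finset.mem_compl.mp hc) haR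
        have haTc : a ∉ Tᶜ := fun hc => (Finset.mem_compl.mp hc) ha
        exact core a haμ₀
          (by rw [Finset.card_erase_of_mem haR]; omega)
          (by rw [Finset.erase_eq_of_notMem haRc]; omega)
          (by rw [Finset.card_erase_of_mem ha]; omega)
          (by rw [Finset.erase_eq_of_notMem haTc]; omega)
      · obtain ⟨a, ha⟩ := Finset.card_pos.mp (show 0 < Rᶜ.card by omega)
        have haR : a ∉ R := Finset.mem_compl.mp ha
        have haT : a ∉ T := fun h => haR (hTR h)
        have haμ₀ : a ≠ μ₀ := fun he => haR (he ▸ hmR)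
        have haTc : a ∈ Tᶜ := Finset.mem_compl.mpr haT
        exact core a haμ₀
          (by rw [Finset.erase_eq_of_notMem haR]; omega)
          (by rw [Finset.card_erase_of_mem ha]; omega)
          (by rw [Finset.erase_eq_of_notMem haT]; omega)
          (by rw [Finset.card_erase_of_mem haTc]; omega)
    have main : ∀ R : Finset A, R ∈ ({P', P'ᶜ} : Finset (Finset A)) →
        2 ≤ R.card → 2 ≤ Rᶜ.card → R.erase μ₀ = P.erase μ₀ → R = P := by
      intro R hRmem hR2' hRc2' hRP
      by_cases hm1 : μ₀ ∈ R
      · by_cases hm2 : μ₀ ∈ P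
        · exact eq_of_erase_eq (by simp [hm1, hm2]) hRP
        · exact absurd (key2 R P hR2' hRc2' hP2 hPc2 (hF R hRmem) hRP hm1 hm2) (by simp)
      · by_cases hm2 : μ₀ ∈ P
        · exfalso
          refine key2 P R hP2 hPc2 hR2' hRc2' (fun μ => (hF R hRmem μ).symm) hRP.symm hm2 hm1
        · exact eq_of_erase_eq (by simp [hm1, hm2]) hRP
    -- at μ₀ : identify the pair
    have hsum0 := card_erase_compl P μ₀
    have hpair0 : ({P.erase μ₀, Pᶜ.erase μ₀} : Finset (Finset A)) =
        {P'.erase μ₀, P'ᶜ.erase μ₀} := by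
      refine pair_eq_of_filter_eq (hF P' (Finset.mem_insert_self _ _) μ₀).symm
        ⟨by omega, by omega⟩ ⟨hR2P, by omega⟩ (erase_compl_ne (by omega))
    have hmemP' : P'.erase μ₀ = P.erase μ₀ ∨ P'.erase μ₀ = Pᶜ.erase μ₀ := by
      have h : P'.erase μ₀ ∈ ({P.erase μ₀, Pᶜ.erase μ₀} : Finset (Finset A)) := by
        rw [hpair0]; exact Finset.mem_insert_self _ _
      simpa using h
    rcases hmemP' with hc | hc
    · have : P' = P := main P' (Finset.mem_insert_self _ _) hP'2 hP'c2 hc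
      rw [this]
    · have hc' : P'ᶜ.erase μ₀ = P.erase μ₀ := by
        have h := compl_erase_congr hc
        rwa [compl_compl] at h
      have : P'ᶜ = P := main P'ᶜ (Finset.mem_insert_of_mem (Finset.mem_singleton_self _))
        hP'c2 (by rwa [compl_compl]) hc'
      rw [← this, compl_compl, Finset.pair_comm]
end
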